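/- arXiv:1806.00356 — 8 statements merged into one kernel-verified Lean document; each statement's English description precedes it below -/
import Mathlib

section
/- If a sequence of lattices Λ_m converges to a lattice Λ in Mahler's sense, and each Λ_m is admissible for a star body S, then Λ is admissible for S. -/
open Filter

/-- If a sequence of lattices (given by bases `A m`) converges in Mahler's sense
to a lattice (with basis `C`), and each is admissible for the star body of `F`,
then the limit lattice is admissible. -/
theorem limit_of_admissible_lattices_is_admissible
    (n : ℕ) (F : (Fin n → ℝ) → ℝ)
    (hcont : Continuous F)
    (hnn : ∀ x, 0 ≤ F x)
    (hpos : ∃ x, 0 < F x)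
    (hhom : ∀ (t : ℝ) (x : Fin n → ℝ), F (t • x) = |t| * F x)
    (A : ℕ → Fin n → Fin n → ℝ) (C : Fin n → Fin n → ℝ)
    (hA : ∀ m, LinearIndependent ℝ (A m))
    (hC : LinearIndependent ℝ C)
    (hconv : ∀ j, Tendsto (fun m => A m j) atTop (nhds (C j)))
    (hadm : ∀ m, ∀ z : Fin n → ℤ,
      (∑ i, (z i : ℝ) • A m i) ∈ interior {x : Fin n → ℝ | F x ≤ 1} → z = 0) :
    ∀ z : Fin n → ℤ,
      (∑ i, (z i : ℝ) • C i) ∈ interior {x : Fin n → ℝ | F x ≤ 1} → z = 0 := by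
  intro z hz
  have hsum : Tendsto (fun m => ∑ i, (z i : ℝ) • A m i) atTop
      (nhds (∑ i, (z i : ℝ) • C i)) :=
    tendsto_finset_sum _ fun i _ => (hconv i).const_smul _
  have hev : ∀ᶠ m in atTop,
      (∑ i, (z i : ℝ) • A m i) ∈ interior {x : Fin n → ℝ | F x ≤ 1} :=
    hsum (isOpen_interior.mem_nhds hz)
  obtain ⟨m, hm⟩ := hev.exists
  exact hadm m z hm
end

section
/- (Mahler's volume inequality, lower bound with Mahler's constant) For every symmetric convex body C in ℝ^n with reciprocal C*, one has V(C)·V(C*) ≥ 4^n/(n!)^2, where V denotes n-dimensional Lebesgue measure. -/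
open Pointwise MeasureTheory

/-- Standard inner product on `ℝⁿ`. -/
def dotp {n : ℕ} (x y : Fin n → ℝ) : ℝ := ∑ i, x i * y i

/-- The reciprocal (polar) body of `C`. -/
def polarBody {n : ℕ} (C : Set (Fin n → ℝ)) : Set (Fin n → ℝ) :=
  {x | ∀ y ∈ C, dotp x y ≤ 1}

/-!
Choose `v₁, …, vₙ ∈ C` maximizing `|det (v₁, …, vₙ)| =: D`; `D > 0` because `C` is a
neighbourhood of `0`. By symmetry and convexity `C` contains the cross-polytope spanned by
the `±vᵢ`, of volume `D · 2ⁿ / n!`. Let `w₁, …, wₙ` be the dual basis. By Cramer's rule,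
`⟪wᵢ, y⟫ = det (v₁, …, y, …, vₙ) / D` (with `y` in the `i`-th place), which has absolute value
at most `1` for `y ∈ C` by maximality; hence `C*` contains the cross-polytope spanned by the
`±wᵢ`, of volume `D⁻¹ · 2ⁿ / n!`.
-/

open Matrix Filter Topology

def l1Ball (ι : Type*) [Fintype ι] : Set (ι → ℝ) := {x | ∑ i, |x i| < 1}

theorem Convex.sum_smul_mem_of_sum_le_one {ι E : Type*} [AddCommGroup E] [Module ℝ E]
    {s : Set E} (hs : Convex ℝ s) (h0 : 0 ∈ s) {t : Finset ι} {w : ι → ℝ} {z : ι → E}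
    (hw₀ : ∀ i ∈ t, 0 ≤ w i) (hw₁ : ∑ i ∈ t, w i ≤ 1) (hz : ∀ i ∈ t, z i ∈ s) :
    ∑ i ∈ t, w i • z i ∈ s := by
  rcases (Finset.sum_nonneg hw₀).eq_or_lt with hW | hW
  · rw [Finset.sum_eq_zero fun i hi => by
      rw [(Finset.sum_eq_zero_iff_of_nonneg hw₀).1 hW.symm i hi, zero_smul]]
    exact h0
  · have := (hs.starConvex h0).smul_mem (hs.centerMass_mem hw₀ hW hz) hW.le hw₁
    rwa [Finset.centerMass, smul_smul, mul_inv_cancel₀ hW.ne', one_smul] at this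

section CrossPolytope

variable {ι : Type*} [Fintype ι]

theorem Balanced.sum_smul_mem_of_sum_abs_le_one {E : Type*} [AddCommGroup E] [Module ℝ E]
    {s : Set E} (hb : Balanced ℝ s) (hs : Convex ℝ s) (h0 : 0 ∈ s) {x : ι → ℝ} {v : ι → E}
    (hx : ∑ i, |x i| ≤ 1) (hv : ∀ i, v i ∈ s) : ∑ i, x i • v i ∈ s := by
  have hsign : ∀ i, x i • v i = |x i| • ((x i / |x i|) • v i) := by
    intro i
    rw [smul_smul]
    rcases eq_or_ne (x i) 0 with h | h
    · simp [h]
    · rw [mul_div_cancel₀ _ (abs_ne_zero.2 h)]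
  simp_rw [hsign]
  refine hs.sum_smul_mem_of_sum_le_one h0 (fun i _ => abs_nonneg _) hx fun i _ => ?_
  refine balanced_iff_smul_mem.1 hb ?_ (hv i)
  rw [Real.norm_eq_abs, abs_div, abs_abs]
  exact div_self_le_one _

theorem volume_l1Ball :
    volume (l1Ball ι) = ENNReal.ofReal (2 ^ Fintype.card ι / (Fintype.card ι).factorial) := by
  have h := volume_sum_rpow_lt_one ι le_rfl
  simp only [Real.rpow_one, div_one, one_add_one_eq_two, Real.Gamma_two, mul_one] at h
  rw [l1Ball, h, Real.Gamma_nat_eq_factorial]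

theorem transpose_mulVec_image_l1Ball_subset {C : Set (ι → ℝ)} (hb : Balanced ℝ C)
    (hc : Convex ℝ C) (h0 : 0 ∈ C) {M : Matrix ι ι ℝ} (hM : ∀ i, M i ∈ C) :
    (Mᵀ *ᵥ ·) '' l1Ball ι ⊆ C := by
  rintro _ ⟨x, hx, rfl⟩
  show Mᵀ *ᵥ x ∈ C
  rw [mulVec_transpose, vecMul_eq_sum]
  exact hb.sum_smul_mem_of_sum_abs_le_one hc h0 hx.le hM

variable [DecidableEq ι]

theorem volume_mulVec_image_l1Ball (A : Matrix ι ι ℝ) :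
    volume ((A *ᵥ ·) '' l1Ball ι) =
      ENNReal.ofReal (|A.det| * (2 ^ Fintype.card ι / (Fintype.card ι).factorial)) := by
  rw [ENNReal.ofReal_mul (abs_nonneg _), ← volume_l1Ball, ← LinearMap.det_toLin',
    ← Measure.addHaar_image_linearMap]
  rfl

end CrossPolytope

section MaximalDeterminant

variable {ι : Type*} [Fintype ι] [DecidableEq ι] {C : Set (ι → ℝ)} {M : Matrix ι ι ℝ}

theorem exists_isMaxOn_abs_det (hC : IsCompact C) (hne : C.Nonempty) :
    ∃ M : Matrix ι ι ℝ, M ∈ (Set.univ.pi fun _ => C) ∧ IsMaxOn (fun N : Matrix ι ι ℝ => |N.det|)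
      (Set.univ.pi fun _ => C) M :=
  (isCompact_univ_pi fun _ => hC).exists_isMaxOn (Set.univ_pi_nonempty_iff.2 fun _ => hne)
    (continuous_id.matrix_det.abs.continuousOn)

theorem abs_det_pos_of_isMaxOn (hC : C ∈ 𝓝 0)
    (hmax : IsMaxOn (fun N : Matrix ι ι ℝ => |N.det|) (Set.univ.pi fun _ => C) M) :
    0 < |M.det| := by
  have hrows : ∀ᶠ t in 𝓝 (0 : ℝ), t • (1 : Matrix ι ι ℝ) ∈ Set.univ.pi fun _ => C := by
    have hlim : Tendsto (fun t : ℝ => t • (1 : Matrix ι ι ℝ)) (𝓝 0) (𝓝 0) :=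
      (show Continuous fun t : ℝ => t • (1 : Matrix ι ι ℝ) by fun_prop).tendsto' 0 0
        (zero_smul ℝ _)
    exact hlim (set_pi_mem_nhds Set.finite_univ fun _ _ => hC)
  obtain ⟨t, ht, htpos⟩ :=
    ((hrows.filter_mono (nhdsWithin_le_nhds (s := Set.Ioi 0))).and self_mem_nhdsWithin).exists
  calc 0 < |t| ^ Fintype.card ι := by positivity
    _ = |(t • (1 : Matrix ι ι ℝ)).det| := by simp [abs_pow]
    _ ≤ |M.det| := hmax ht

theorem abs_vecMul_inv_apply_le_one (hM : M ∈ Set.univ.pi fun _ => C)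
    (hmax : IsMaxOn (fun N : Matrix ι ι ℝ => |N.det|) (Set.univ.pi fun _ => C) M)
    (hdet : M.det ≠ 0) {y : ι → ℝ} (hy : y ∈ C) (i : ι) : |(y ᵥ* M⁻¹) i| ≤ 1 := by
  have hcramer : (y ᵥ* M⁻¹) i = (M.updateRow i y).det / M.det := by
    rw [eq_div_iff hdet, mul_comm, ← smul_eq_mul, ← Pi.smul_apply,
      det_smul_inv_vecMul_eq_cramer_transpose _ _ (isUnit_iff_ne_zero.2 hdet),
      cramer_transpose_apply]
  have hrows : M.updateRow i y ∈ Set.univ.pi fun _ => C := by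
    intro j _
    rcases eq_or_ne j i with rfl | hj
    · simpa using hy
    · simpa [updateRow_ne hj] using hM j trivial
  rw [hcramer, abs_div, div_le_one (abs_pos.2 hdet)]
  exact hmax hrows

end MaximalDeterminant

theorem mulVec_image_l1Ball_subset_polarBody {n : ℕ} {C : Set (Fin n → ℝ)}
    (W : Matrix (Fin n) (Fin n) ℝ) (hW : ∀ y ∈ C, ∀ i, |(y ᵥ* W) i| ≤ 1) :
    (W *ᵥ ·) '' l1Ball (Fin n) ⊆ polarBody C := by
  rintro _ ⟨x, hx, rfl⟩ y hy
  calc dotp (W *ᵥ x) y = ∑ i, (y ᵥ* W) i * x i := by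
        rw [dotp, ← dotProduct, dotProduct_comm, dotProduct_mulVec]; rfl
    _ ≤ ∑ i, |x i| := Finset.sum_le_sum fun i _ => (le_abs_self _).trans <| by
        rw [abs_mul]; exact mul_le_of_le_one_left (abs_nonneg _) (hW y hy i)
    _ ≤ 1 := hx.le

/-- Mahler's lower bound for the volume product:
`V(C) · V(C*) ≥ 4ⁿ / (n!)²` for every symmetric convex body `C` in `ℝⁿ`. -/
theorem mahler_volume_product_lower_bound
    (n : ℕ) (C : Set (Fin n → ℝ))
    (hcomp : IsCompact C) (hconv : Convex ℝ C) (hsym : C = -C)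
    (h0 : (0 : Fin n → ℝ) ∈ interior C) :
    ENNReal.ofReal (4 ^ n / ((Nat.factorial n : ℝ)) ^ 2) ≤
      volume C * volume (polarBody C) := by
  have hC0 : C ∈ 𝓝 0 := mem_interior_iff_mem_nhds.1 h0
  have hbal : Balanced ℝ C := (balanced_iff_neg_mem hconv).2 fun x hx => by
    rw [hsym]; exact Set.neg_mem_neg.2 hx
  obtain ⟨M, hMC, hmax⟩ := exists_isMaxOn_abs_det hcomp ⟨0, mem_of_mem_nhds hC0⟩
  have hdet : 0 < |M.det| := abs_det_pos_of_isMaxOn hC0 hmax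
  have hvolC : ENNReal.ofReal (|M.det| * (2 ^ n / n.factorial)) ≤ volume C :=
    calc _ = volume ((Mᵀ *ᵥ ·) '' l1Ball (Fin n)) := by
          rw [volume_mulVec_image_l1Ball, det_transpose, Fintype.card_fin]
      _ ≤ volume C := measure_mono <| transpose_mulVec_image_l1Ball_subset hbal hconv
          (mem_of_mem_nhds hC0) fun i => hMC i trivial
  have hvolP : ENNReal.ofReal (|M.det|⁻¹ * (2 ^ n / n.factorial)) ≤ volume (polarBody C) :=
    calc _ = volume ((M⁻¹ *ᵥ ·) '' l1Ball (Fin n)) := by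
          rw [volume_mulVec_image_l1Ball, det_nonsing_inv, Ring.inverse_eq_inv', abs_inv,
            Fintype.card_fin]
      _ ≤ volume (polarBody C) := measure_mono <| mulVec_image_l1Ball_subset_polarBody _
          fun y hy => abs_vecMul_inv_apply_le_one hMC hmax (abs_pos.1 hdet) hy
  calc ENNReal.ofReal (4 ^ n / ((Nat.factorial n : ℝ)) ^ 2)
      = ENNReal.ofReal (|M.det| * (2 ^ n / n.factorial)) *
          ENNReal.ofReal (|M.det|⁻¹ * (2 ^ n / n.factorial)) := by
        rw [← ENNReal.ofReal_mul (by positivity)]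
        congr 1
        field_simp
        rw [← pow_mul, mul_comm, pow_mul]; norm_num
    _ ≤ volume C * volume (polarBody C) := mul_le_mul' hvolC hvolP
end

section
/- (Mahler's volume inequality, upper bound) For every symmetric convex body C in ℝ^n with reciprocal C*, one has V(C)·V(C*) ≤ 4^n. -/
open Pointwise MeasureTheory Matrix

/-- Mahler's upper bound for the volume product:
`V(C) · V(C*) ≤ 4ⁿ` for every symmetric convex body `C` in `ℝⁿ`. -/
theorem mahler_volume_product_upper_bound
    (n : ℕ) (C : Set (Fin n → ℝ))
    (hcomp : IsCompact C) (hconv : Convex ℝ C) (hsym : C = -C)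
    (h0 : (0 : Fin n → ℝ) ∈ interior C) :
    volume C * volume (polarBody C) ≤ ENNReal.ofReal (4 ^ n) := by
  classical
  -- the cube `[-1,1]^n`
  set cube : Set (Fin n → ℝ) := Set.pi Set.univ (fun _ => Set.Icc (-1:ℝ) 1) with hcube
  have hvolcube : volume cube = ENNReal.ofReal 2 ^ n := by
    rw [hcube, volume_pi_pi]
    simp [Real.volume_Icc]
    norm_num
  -- maximize |det| over families of points of C
  have h0C : (0 : Fin n → ℝ) ∈ C := interior_subset h0
  set K : Set (Fin n → Fin n → ℝ) := Set.pi Set.univ (fun _ => C) with hKdef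
  have hK : IsCompact K := isCompact_univ_pi (fun _ => hcomp)
  have hKne : K.Nonempty := ⟨fun _ => 0, fun i _ => h0C⟩
  have hfc : Continuous (fun w : Fin n → Fin n → ℝ => |(Matrix.of w).det|) := by
    have : Continuous (fun w : Fin n → Fin n → ℝ => (Matrix.of w).det) :=
      Continuous.matrix_det continuous_id
    exact this.abs
  obtain ⟨v, hvK, hvmax⟩ := hK.exists_isMaxOn hKne hfc.continuousOn
  set M : Matrix (Fin n) (Fin n) ℝ := Matrix.of v with hM
  have hrow : ∀ i, v i ∈ C := fun i => hvK i (Set.mem_univ i)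
  -- positivity of the max determinant
  obtain ⟨ε, hε, hball⟩ := Metric.mem_nhds_iff.mp (mem_interior_iff_mem_nhds.mp h0)
  have hDpos : 0 < |M.det| := by
    set w : Fin n → Fin n → ℝ := fun i => (ε/2) • (Pi.single i 1 : Fin n → ℝ) with hw
    have hwC : ∀ i, w i ∈ C := by
      intro i
      apply hball
      rw [Metric.mem_ball, dist_zero_right]
      have : ‖w i‖ ≤ ε / 2 := by
        apply pi_norm_le_iff_of_nonneg (by positivity) |>.mpr
        intro j
        simp only [hw, Pi.smul_apply, smul_eq_mul, Real.norm_eq_abs]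
        rcases eq_or_ne j i with rfl | hne
        · rw [Pi.single_eq_same, mul_one, abs_of_nonneg (by positivity)]
        · rw [Pi.single_eq_of_ne hne, mul_zero, abs_zero]; positivity
      linarith
    have hwK : w ∈ K := fun i _ => hwC i
    have hdet : (Matrix.of w).det = (ε/2) ^ n := by
      have : Matrix.of w = (ε/2) • (1 : Matrix (Fin n) (Fin n) ℝ) := by
        ext i j
        simp [hw, Matrix.one_apply, Pi.single_apply, eq_comm]
      rw [this, Matrix.det_smul, Matrix.det_one, mul_one, Fintype.card_fin]
    have hle : |(Matrix.of w).det| ≤ |(Matrix.of v).det| := hvmax hwK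
    rw [hdet] at hle
    calc (0:ℝ) < |(ε/2)^n| := by positivity
    _ ≤ |M.det| := hle
  have hMdet : M.det ≠ 0 := fun h => by simp [h] at hDpos
  have hMunit : IsUnit M.det := isUnit_iff_ne_zero.mpr hMdet
  -- C is contained in the image of the cube under x ↦ x ᵥ* M
  have hCsub : C ⊆ (Matrix.toLin' M.transpose) '' cube := by
    intro x hx
    set a : Fin n → ℝ := x ᵥ* M⁻¹ with ha
    have hax : a ᵥ* M = x := by
      rw [ha, Matrix.vecMul_vecMul, Matrix.nonsing_inv_mul M hMunit, Matrix.vecMul_one]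
    have hacube : a ∈ cube := by
      intro i _
      have hxcomb : x = ∑ k, a k • M k := by
        funext j
        rw [← hax]
        simp [Matrix.vecMul, dotProduct, Finset.sum_apply]
      have hupd : (M.updateRow i x).det = a i * M.det := by
        rw [hxcomb, Matrix.det_updateRow_sum, smul_eq_mul]
      have hmem : Function.update v i x ∈ K := by
        intro j _
        rcases eq_or_ne j i with rfl | hne
        · simpa using hx
        · simpa [Function.update_of_ne hne] using hrow j
      have hle : |(Matrix.of (Function.update v i x)).det| ≤ |(Matrix.of v).det| :=
        hvmax hmem
      have heq : (Matrix.of (Function.update v i x)) = M.updateRow i x := by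
        ext j k
        rcases eq_or_ne j i with rfl | hne
        · simp [Matrix.updateRow_self]
        · simp [Matrix.updateRow_ne hne, Function.update_of_ne hne, hM]
      rw [heq] at hle
      have : |a i| * |M.det| ≤ 1 * |M.det| := by
        rw [← abs_mul, ← hupd, one_mul]
        exact hle
      have hai : |a i| ≤ 1 := le_of_mul_le_mul_right (by linarith) hDpos
      exact abs_le.mp hai
    refine ⟨a, hacube, ?_⟩
    rw [Matrix.toLin'_apply, Matrix.mulVec_transpose, hax]
  -- the polar body is contained in the image of the cube under b ↦ M⁻¹ *ᵥ b
  have hPsub : polarBody C ⊆ (Matrix.toLin' M⁻¹) '' cube := by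
    intro y hy
    set b : Fin n → ℝ := M *ᵥ y with hb
    have hbcube : b ∈ cube := by
      intro i _
      have h1 : dotp y (v i) ≤ 1 := hy (v i) (hrow i)
      have h2 : dotp y (-(v i)) ≤ 1 := by
        apply hy
        have : v i ∈ -C := hsym ▸ hrow i
        simpa using this
      have hneg : dotp y (-(v i)) = -dotp y (v i) := by
        simp [dotp, Finset.sum_neg_distrib]
      have hbi : b i = dotp y (v i) := by
        simp [hb, Matrix.mulVec, dotProduct, dotp, hM, mul_comm]
      constructor
      · rw [hbi]; linarith [hneg ▸ h2]
      · rw [hbi]; exact h1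
    refine ⟨b, hbcube, ?_⟩
    rw [Matrix.toLin'_apply, hb, Matrix.mulVec_mulVec, Matrix.nonsing_inv_mul M hMunit,
      Matrix.one_mulVec]
  -- volume estimates
  have hvolC : volume C ≤ ENNReal.ofReal |M.det| * ENNReal.ofReal 2 ^ n := by
    calc volume C ≤ volume ((Matrix.toLin' M.transpose) '' cube) := measure_mono hCsub
    _ = ENNReal.ofReal |LinearMap.det (Matrix.toLin' M.transpose)| * volume cube :=
        Measure.addHaar_image_linearMap _ _ _
    _ = ENNReal.ofReal |M.det| * ENNReal.ofReal 2 ^ n := by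
        rw [LinearMap.det_toLin', Matrix.det_transpose, hvolcube]
  have hvolP : volume (polarBody C) ≤ ENNReal.ofReal |M.det|⁻¹ * ENNReal.ofReal 2 ^ n := by
    calc volume (polarBody C) ≤ volume ((Matrix.toLin' M⁻¹) '' cube) := measure_mono hPsub
    _ = ENNReal.ofReal |LinearMap.det (Matrix.toLin' M⁻¹)| * volume cube :=
        Measure.addHaar_image_linearMap _ _ _
    _ = ENNReal.ofReal |M.det|⁻¹ * ENNReal.ofReal 2 ^ n := by
        rw [LinearMap.det_toLin', Matrix.det_nonsing_inv, Ring.inverse_eq_inv', abs_inv, hvolcube]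
  calc volume C * volume (polarBody C)
      ≤ (ENNReal.ofReal |M.det| * ENNReal.ofReal 2 ^ n) *
        (ENNReal.ofReal |M.det|⁻¹ * ENNReal.ofReal 2 ^ n) := mul_le_mul' hvolC hvolP
    _ = ENNReal.ofReal (4 ^ n) := by
        rw [mul_mul_mul_comm, ← ENNReal.ofReal_mul hDpos.le,
          mul_inv_cancel₀ hDpos.ne', ENNReal.ofReal_one, one_mul, ← mul_pow,
          ← ENNReal.ofReal_mul (by norm_num), ← ENNReal.ofReal_pow (by norm_num)]
        norm_num
end

section
/- For any symmetric convex body C in ℝ^n and lattice Λ in ℝ^n, and for every a ∈ ℝ^n, there exists z ∈ Λ such that a + z ∈ n·λ_n(C,Λ)·C, where λ_n(C,Λ) is the n-th successive minimum of C with respect to Λ. -/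
open Pointwise Matrix

/-- The lattice spanned over ℤ by the rows of `B`. -/
def latticeOf {n : ℕ} (B : Fin n → Fin n → ℝ) : Set (Fin n → ℝ) :=
  {x | ∃ z : Fin n → ℤ, x = ∑ i, (z i : ℝ) • B i}

/-- The `i`-th successive minimum of `C` with respect to `L`. -/
noncomputable def succMin {E : Type*} [AddCommGroup E] [Module ℝ E]
    (C L : Set E) (i : ℕ) : ℝ :=
  sInf {lam : ℝ | 0 < lam ∧ ∃ v : Fin i → E, LinearIndependent ℝ v ∧
    ∀ j, v j ∈ L ∧ v j ∈ lam • C}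

lemma latticeOf_eq_span {n : ℕ} (B : Fin n → Fin n → ℝ) :
    latticeOf B = (Submodule.span ℤ (Set.range B) : Set (Fin n → ℝ)) := by
  ext x
  rw [latticeOf, Set.mem_setOf_eq, SetLike.mem_coe, Submodule.mem_span_range_iff_exists_fun]
  constructor
  · rintro ⟨z, rfl⟩
    exact ⟨z, Finset.sum_congr rfl fun i _ => (Int.cast_smul_eq_zsmul ℝ (z i) (B i)).symm⟩
  · rintro ⟨z, rfl⟩
    exact ⟨z, (Finset.sum_congr rfl fun i _ => (Int.cast_smul_eq_zsmul ℝ (z i) (B i)).symm)⟩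

-- convex symmetric: |t| ≤ 1 scaling stays in C
lemma smul_mem_of_abs_le {n : ℕ} {C : Set (Fin n → ℝ)} (hconv : Convex ℝ C) (hsym : C = -C)
    {t : ℝ} (ht : |t| ≤ 1) {u : Fin n → ℝ} (hu : u ∈ C) : t • u ∈ C := by
  have hnegu : -u ∈ C := by rw [hsym]; simpa using hu
  have h1 : (0:ℝ) ≤ (1 + t)/2 := by have := neg_le_of_abs_le ht; linarith
  have h2 : (0:ℝ) ≤ (1 - t)/2 := by have := le_of_abs_le ht; linarith
  have h3 : (1+t)/2 + (1-t)/2 = 1 := by ring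
  have := hconv hu hnegu h1 h2 h3
  have heq : ((1+t)/2) • u + ((1-t)/2) • (-u) = t • u := by
    rw [smul_neg, ← neg_smul, ← add_smul]; congr 1; ring
  rwa [heq] at this

lemma smul_set_monotone {n : ℕ} {C : Set (Fin n → ℝ)} (hconv : Convex ℝ C) (hsym : C = -C)
    {s t : ℝ} (hs : 0 ≤ s) (hst : s ≤ t) : s • C ⊆ t • C := by
  rintro x ⟨c, hc, rfl⟩
  rcases eq_or_lt_of_le (hs.trans hst) with h | ht
  · have hs0 : s = 0 := le_antisymm (hst.trans h.symm.le) hs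
    exact ⟨c, hc, by rw [← h, hs0]⟩
  · refine ⟨(s/t) • c, smul_mem_of_abs_le hconv hsym ?_ hc, ?_⟩
    · rw [abs_of_nonneg (div_nonneg hs ht.le)]
      exact (div_le_one ht).2 hst
    · show t • ((s/t) • c) = s • c
      rw [smul_smul]; congr 1; field_simp

/-- Covering step: from n linearly independent lattice points in `lam • C`,
cover any point up to `(n*lam) • C`. -/
lemma covering_step {n : ℕ} (hn : 0 < n) {C : Set (Fin n → ℝ)}
    (hconv : Convex ℝ C) (hsym : C = -C)
    (Λ : Submodule ℤ (Fin n → ℝ)) {lam : ℝ}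
    (v : Fin n → Fin n → ℝ) (hv : LinearIndependent ℝ v)
    (hvL : ∀ j, v j ∈ Λ) (hvC : ∀ j, v j ∈ lam • C) (a : Fin n → ℝ) :
    ∃ z ∈ (Λ : Set (Fin n → ℝ)), a + z ∈ ((n : ℝ) * lam) • C := by
  have hcard : Fintype.card (Fin n) = Module.finrank ℝ (Fin n → ℝ) := by simp
  haveI : Nonempty (Fin n) := Fin.pos_iff_nonempty.mp hn
  let b := basisOfLinearIndependentOfCardEqFinrank hv hcard
  have hb : ∀ i, b i = v i := fun i =>
    congrFun (coe_basisOfLinearIndependentOfCardEqFinrank hv hcard) i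
  set c : Fin n → ℝ := fun i => b.repr a i with hc
  set m : Fin n → ℤ := fun i => round (c i) with hm
  refine ⟨∑ i, (-(m i)) • v i,
    Submodule.sum_mem _ (fun i _ => Submodule.smul_mem _ _ (hvL i)), ?_⟩
  have ha : a = ∑ i, c i • v i := by
    conv_lhs => rw [← b.sum_repr a]
    refine Finset.sum_congr rfl fun i _ => ?_
    rw [hb i]
  have key : a + ∑ i, (-(m i)) • v i = ∑ i, (c i - (m i : ℝ)) • v i := by
    rw [ha, ← Finset.sum_add_distrib]
    refine Finset.sum_congr rfl fun i _ => ?_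
    rw [sub_smul, ← Int.cast_smul_eq_zsmul ℝ (-(m i)) (v i)]
    push_cast
    rw [neg_smul]
    ring_nf
  rw [key]
  -- each summand is in lam • C
  have hx : ∀ i, ∃ u ∈ C, (c i - (m i : ℝ)) • v i = lam • u := by
    intro i
    obtain ⟨u, hu, huv⟩ := hvC i
    refine ⟨(c i - (m i : ℝ)) • u, smul_mem_of_abs_le hconv hsym ?_ hu, ?_⟩
    · have := abs_sub_round (c i)
      rw [hm]; simp only []
      calc |c i - (round (c i) : ℝ)| ≤ 1/2 := this
        _ ≤ 1 := by norm_num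
    · rw [← huv, smul_comm]
  choose u hu huv using hx
  have hnR : (0:ℝ) < n := Nat.cast_pos.2 hn
  refine ⟨∑ i, ((n:ℝ))⁻¹ • u i, ?_, ?_⟩
  · refine hconv.sum_mem (fun i _ => by positivity) ?_ (fun i _ => hu i)
    rw [Finset.sum_const, Finset.card_univ, Fintype.card_fin, nsmul_eq_mul]
    field_simp
  · show ((n:ℝ)*lam) • ∑ i, ((n:ℝ))⁻¹ • u i = ∑ i, (c i - (m i : ℝ)) • v i
    rw [Finset.smul_sum]
    refine Finset.sum_congr rfl fun i _ => ?_
    rw [huv i, smul_smul]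
    congr 1
    field_simp

lemma lattice_props {n : ℕ} (B : Fin n → Fin n → ℝ) (hB : (Matrix.of B).det ≠ 0) :
    ∃ ε > (0:ℝ), (∀ x ∈ latticeOf B, x ≠ 0 → ε ≤ ‖x‖) ∧
      ∀ M : ℝ, {x ∈ latticeOf B | ‖x‖ ≤ M}.Finite := by
  classical
  have hdet : IsUnit ((Matrix.of B)ᵀ).det := by
    rw [Matrix.det_transpose]; exact isUnit_iff_ne_zero.2 hB
  let e := Matrix.toLinearEquiv' ((Matrix.of B)ᵀ) (Matrix.invertibleOfIsUnitDet _ hdet)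
  have he : ∀ x : Fin n → ℝ, e x = ∑ i, x i • B i := by
    intro x
    have h1 : e x = Matrix.toLin' ((Matrix.of B)ᵀ) x := rfl
    rw [h1, Matrix.toLin'_apply, Matrix.mulVec_transpose]
    funext j
    simp [Matrix.vecMul, dotProduct, Matrix.of_apply, Finset.sum_apply]
  let g := LinearMap.toContinuousLinearMap (e.symm : (Fin n → ℝ) →ₗ[ℝ] (Fin n → ℝ))
  set K := ‖g‖ + 1 with hKdef
  have hK : 0 < K := by positivity
  have hbound : ∀ x : Fin n → ℝ, ‖x‖ ≤ K * ‖e x‖ := by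
    intro x
    have h2 : ‖e.symm (e x)‖ ≤ ‖g‖ * ‖e x‖ := g.le_opNorm (e x)
    rw [e.symm_apply_apply] at h2
    nlinarith [norm_nonneg (e x)]
  refine ⟨K⁻¹, by positivity, ?_, ?_⟩
  · rintro x ⟨z, rfl⟩ hx0
    set zr : Fin n → ℝ := fun i => ((z i : ℝ)) with hzr
    have hez : e zr = ∑ i, (z i : ℝ) • B i := he zr
    obtain ⟨i, hi⟩ : ∃ i, z i ≠ 0 := by
      by_contra h
      push_neg at h
      exact hx0 (by simp [h])
    have h1 : (1:ℝ) ≤ |(z i : ℝ)| := by exact_mod_cast Int.one_le_abs hi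
    have h2 : |(z i : ℝ)| ≤ ‖zr‖ := norm_le_pi_norm zr i
    have h3 : ‖zr‖ ≤ K * ‖∑ i, (z i : ℝ) • B i‖ := by
      have := hbound zr; rwa [hez] at this
    rw [inv_le_iff_one_le_mul₀ hK]
    nlinarith [h1.trans (h2.trans h3)]
  · intro M
    have hfin : (Set.pi Set.univ (fun _ : Fin n => Set.Icc (-⌈K*M⌉) ⌈K*M⌉)).Finite :=
      Set.Finite.pi fun _ => Set.finite_Icc _ _
    refine (hfin.image (fun z : Fin n → ℤ => ∑ i, ((z i):ℝ) • B i)).subset ?_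
    rintro x ⟨⟨z, rfl⟩, hxM⟩
    refine ⟨z, ?_, rfl⟩
    intro i _
    set zr : Fin n → ℝ := fun i => ((z i : ℝ)) with hzr
    have h3 : ‖zr‖ ≤ K * ‖∑ i, (z i : ℝ) • B i‖ := by
      have := hbound zr; rwa [he zr] at this
    have h4 : ‖zr‖ ≤ K * M :=
      h3.trans (by nlinarith [norm_nonneg (∑ i, (z i : ℝ) • B i)])
    have h5 : |(z i : ℝ)| ≤ K * M := (norm_le_pi_norm zr i).trans h4
    have h6 : |(z i : ℝ)| ≤ (⌈K*M⌉ : ℝ) := h5.trans (Int.le_ceil _)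
    have h7 : |z i| ≤ ⌈K*M⌉ := by exact_mod_cast h6
    exact Set.mem_Icc.2 (abs_le.1 h7)

lemma S_nonempty {n : ℕ} {C : Set (Fin n → ℝ)} (hconv : Convex ℝ C) (hsym : C = -C)
    (h0 : (0 : Fin n → ℝ) ∈ interior C)
    (B : Fin n → Fin n → ℝ) (hB : (Matrix.of B).det ≠ 0) :
    ∃ lam : ℝ, 0 < lam ∧ ∃ v : Fin n → (Fin n → ℝ), LinearIndependent ℝ v ∧
      ∀ j, v j ∈ latticeOf B ∧ v j ∈ lam • C := by
  obtain ⟨ε, hε, hball⟩ := Metric.mem_nhds_iff.1 (mem_interior_iff_mem_nhds.1 h0)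
  obtain ⟨M, hM⟩ := Finite.exists_le fun i => ‖B i‖
  set M' := max M 0 with hM'
  have hM'0 : 0 ≤ M' := le_max_right _ _
  set lam := 2*(M'+1)/ε with hlam
  have hlam0 : 0 < lam := by positivity
  have hBlin : LinearIndependent ℝ B := by
    have := Matrix.linearIndependent_rows_iff_isUnit.2
      ((Matrix.isUnit_iff_isUnit_det _).2 (isUnit_iff_ne_zero.2 hB))
    exact this
  refine ⟨lam, hlam0, B, hBlin, fun j => ⟨?_, ?_⟩⟩
  · exact ⟨fun i => if i = j then 1 else 0, by simp⟩
  · refine ⟨lam⁻¹ • B j, hball ?_, ?_⟩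
    · rw [Metric.mem_ball, dist_zero_right, norm_smul, norm_inv, Real.norm_of_nonneg hlam0.le]
      have h1 : ‖B j‖ ≤ M' := (hM j).trans (le_max_left _ _)
      have h2 : lam⁻¹ = ε / (2*(M'+1)) := by rw [hlam]; field_simp
      rw [h2]
      have h3 : ε / (2*(M'+1)) * ‖B j‖ ≤ ε / (2*(M'+1)) * M' := by
        apply mul_le_mul_of_nonneg_left h1 (by positivity)
      refine h3.trans_lt ?_
      rw [div_mul_eq_mul_div, div_lt_iff₀ (by positivity)]
      nlinarith
    · show lam • lam⁻¹ • B j = B j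
      rw [smul_smul, mul_inv_cancel₀ hlam0.ne', one_smul]

/-- For every `a ∈ ℝⁿ` there is a lattice vector `z` with
`a + z ∈ n·λ_n(C,Λ) • C`. -/
theorem inhomogeneous_covering_bound
    (n : ℕ) (C : Set (Fin n → ℝ))
    (hcomp : IsCompact C) (hconv : Convex ℝ C) (hsym : C = -C)
    (h0 : (0 : Fin n → ℝ) ∈ interior C)
    (B : Fin n → Fin n → ℝ) (hB : (Matrix.of B).det ≠ 0) :
    ∀ a : Fin n → ℝ, ∃ z ∈ latticeOf B,
      a + z ∈ ((n : ℝ) * succMin C (latticeOf B) n) • C := by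
  intro a
  have h0C : (0 : Fin n → ℝ) ∈ C := interior_subset h0
  rcases Nat.eq_zero_or_pos n with hn | hn
  · subst hn
    refine ⟨0, ⟨0, by simp⟩, ⟨0, h0C, Subsingleton.elim _ _⟩⟩
  -- setup
  set S := {lam : ℝ | 0 < lam ∧ ∃ v : Fin n → (Fin n → ℝ), LinearIndependent ℝ v ∧
      ∀ j, v j ∈ latticeOf B ∧ v j ∈ lam • C} with hSdef
  have hsucc : succMin C (latticeOf B) n = sInf S := rfl
  set lam := sInf S with hlamdef
  have hSne : S.Nonempty := S_nonempty hconv hsym h0 B hB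
  have hbdd : BddBelow S := ⟨0, fun x hx => hx.1.le⟩
  -- bound on C
  obtain ⟨R0, hR0⟩ := (Metric.isBounded_iff_subset_closedBall 0).1 hcomp.isBounded
  set R := max R0 1 with hR
  have hR1 : (1:ℝ) ≤ R := le_max_right _ _
  have hRpos : (0:ℝ) < R := lt_of_lt_of_le one_pos hR1
  have hCR : ∀ u ∈ C, ‖u‖ ≤ R := fun u hu => by
    have := hR0 hu
    rw [Metric.mem_closedBall, dist_zero_right] at this
    exact this.trans (le_max_left _ _)
  -- lattice discreteness
  obtain ⟨ε, hε, hsep, hfin⟩ := lattice_props B hB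
  -- positivity of lam
  have hlam_lb : ∀ lam' ∈ S, ε / R ≤ lam' := by
    rintro lam' ⟨hl0, v, hv, hvm⟩
    have hvne : v ⟨0, hn⟩ ≠ 0 := hv.ne_zero ⟨0, hn⟩
    obtain ⟨u, hu, huv⟩ := (hvm ⟨0, hn⟩).2
    have h1 : ε ≤ ‖v ⟨0, hn⟩‖ := hsep _ (hvm ⟨0, hn⟩).1 hvne
    have h2 : ‖v ⟨0, hn⟩‖ ≤ lam' * R := by
      rw [← huv, norm_smul, Real.norm_of_nonneg hl0.le]
      exact mul_le_mul_of_nonneg_left (hCR u hu) hl0.le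
    rw [div_le_iff₀ hRpos]
    exact h1.trans h2
  have hlam_pos : 0 < lam := lt_of_lt_of_le (by positivity) (le_csInf hSne hlam_lb)
  have hnpos : (0:ℝ) < n := Nat.cast_pos.2 hn
  -- step: for every k there is a suitable lattice vector
  have key : ∀ k : ℕ, ∃ z ∈ latticeOf B,
      a + z ∈ ((n : ℝ) * (lam + 1/((k:ℝ)+1))) • C := by
    intro k
    have hklt : lam < lam + 1/((k:ℝ)+1) := by
      have : (0:ℝ) < 1/((k:ℝ)+1) := by positivity
      linarith
    obtain ⟨lam', hl'S, hl'lt⟩ := (csInf_lt_iff hbdd hSne).1 hklt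
    obtain ⟨hl'0, v, hv, hvm⟩ := hl'S
    obtain ⟨z, hzmem, hz⟩ := covering_step hn hconv hsym (Submodule.span ℤ (Set.range B))
      v hv (fun j => by
        have := (hvm j).1
        rwa [latticeOf_eq_span] at this) (fun j => (hvm j).2) a
    refine ⟨z, by rwa [latticeOf_eq_span], ?_⟩
    refine smul_set_monotone hconv hsym (by positivity) ?_ hz
    exact mul_le_mul_of_nonneg_left hl'lt.le hnpos.le
  choose zf hzf hmem using key
  -- all the zf k live in a finite set
  set M : ℝ := ‖a‖ + ((n:ℝ) * (lam + 1)) * R with hM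
  have hzbound : ∀ k, zf k ∈ {x ∈ latticeOf B | ‖x‖ ≤ M} := by
    intro k
    refine ⟨hzf k, ?_⟩
    obtain ⟨u, hu, huv⟩ := hmem k
    have h1 : ‖a + zf k‖ ≤ ((n:ℝ) * (lam + 1)) * R := by
      rw [← huv, norm_smul, Real.norm_of_nonneg (by positivity)]
      have h2 : ‖u‖ ≤ R := hCR u hu
      have h3 : (n:ℝ) * (lam + 1/((k:ℝ)+1)) ≤ (n:ℝ) * (lam + 1) := by
        have : 1/((k:ℝ)+1) ≤ 1 := by
          rw [div_le_one (by positivity)]; linarith [Nat.cast_nonneg (α := ℝ) k]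
        nlinarith
      exact mul_le_mul h3 h2 (norm_nonneg u) (by positivity)
    calc ‖zf k‖ = ‖(a + zf k) - a‖ := by ring_nf
      _ ≤ ‖a + zf k‖ + ‖a‖ := norm_sub_le _ _
      _ ≤ ((n:ℝ) * (lam + 1)) * R + ‖a‖ := by linarith
      _ = M := by rw [hM]; ring
  -- pigeonhole
  have hFfin : {x ∈ latticeOf B | ‖x‖ ≤ M}.Finite := hfin M
  haveI := hFfin.to_subtype
  obtain ⟨y, hy⟩ := Finite.exists_infinite_fiber
    (fun k : ℕ => (⟨zf k, hzbound k⟩ : {x ∈ latticeOf B | ‖x‖ ≤ M}))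
  rw [Set.infinite_coe_iff] at hy
  set z := (y : Fin n → ℝ) with hz
  have hzL : z ∈ latticeOf B := y.2.1
  have hall : ∀ k : ℕ, a + z ∈ ((n : ℝ) * (lam + 1/((k:ℝ)+1))) • C := by
    intro k
    obtain ⟨k', hk'mem, hk'gt⟩ := hy.exists_gt k
    have hzk' : zf k' = z := by
      have h : (⟨zf k', hzbound k'⟩ : {x ∈ latticeOf B | ‖x‖ ≤ M}) = y := hk'mem
      exact congrArg Subtype.val h
    rw [← hzk']
    refine smul_set_monotone hconv hsym (by positivity) ?_ (hmem k')
    have h1 : 1/((k':ℝ)+1) ≤ 1/((k:ℝ)+1) := by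
      apply one_div_le_one_div_of_le (by positivity)
      have : (k:ℝ) ≤ (k':ℝ) := Nat.cast_le.2 hk'gt.le
      linarith
    nlinarith
  -- pass to the limit
  have hne : ∀ k : ℕ, ((n : ℝ) * (lam + 1/((k:ℝ)+1))) ≠ 0 := by
    intro k; positivity
  have huC : ∀ k : ℕ, ((n : ℝ) * (lam + 1/((k:ℝ)+1)))⁻¹ • (a + z) ∈ C := by
    intro k
    obtain ⟨u, hu, huv⟩ := hall k
    rw [← huv, inv_smul_smul₀ (hne k)]
    exact hu
  have htend : Filter.Tendsto
      (fun k : ℕ => ((n : ℝ) * (lam + 1/((k:ℝ)+1)))⁻¹ • (a + z))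
      Filter.atTop (nhds (((n:ℝ) * lam)⁻¹ • (a + z))) := by
    have h1 : Filter.Tendsto (fun k : ℕ => 1/((k:ℝ)+1)) Filter.atTop (nhds 0) :=
      tendsto_one_div_add_atTop_nhds_zero_nat
    have h2 : Filter.Tendsto (fun k : ℕ => (n:ℝ) * (lam + 1/((k:ℝ)+1)))
        Filter.atTop (nhds ((n:ℝ) * (lam + 0))) :=
      (Filter.Tendsto.const_add lam h1).const_mul _
    rw [add_zero] at h2
    exact (h2.inv₀ (by positivity)).smul_const _
  have hlim : ((n:ℝ) * lam)⁻¹ • (a + z) ∈ C :=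
    hcomp.isClosed.mem_of_tendsto htend (Filter.Eventually.of_forall huC)
  refine ⟨z, hzL, ⟨((n:ℝ) * lam)⁻¹ • (a + z), hlim, ?_⟩⟩
  show ((n:ℝ) * lam) • ((n:ℝ) * lam)⁻¹ • (a + z) = a + z
  rw [smul_inv_smul₀ (by positivity)]
end

section
/- (Determinant of compound lattices) Let Λ be a lattice in ℝ^n and 1 ≤ p ≤ n−1. Let Λ_p be the lattice in ℝ^N, N = C(n,p), generated by all exterior products x_1 ∧ ⋯ ∧ x_p with x_1,…,x_p ∈ Λ (identified with ℝ^N via the standard basis of Λ^p(ℝ^n)). Then d(Λ_p) = d(Λ)^P with P = C(n−1, p−1). -/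
/-- Index set for coordinates of the `p`-th exterior power of `ℝⁿ`:
subsets of `{1,…,n}` of size `p` (equivalently increasing `p`-tuples). -/
abbrev WedgeIdx (n p : ℕ) := {s : Finset (Fin n) // s.card = p}

/-- The exterior product `x₁ ∧ ⋯ ∧ x_p`, identified with a vector of `ℝ^N`,
`N = C(n,p)`, via Plücker coordinates in the standard basis: the coordinate at
an increasing tuple `i₁ < ⋯ < i_p` is the corresponding `p × p` minor. -/
noncomputable def wedge (n p : ℕ) (v : Fin p → Fin n → ℝ) : WedgeIdx n p → ℝ :=
  fun s => Matrix.det (Matrix.of fun i j => v i ((s.1.orderIsoOfFin s.2 j : Fin n)))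

/-- The lattice spanned over ℤ by the rows of `B` (general finite index type). -/
def latticeOfI {ι : Type*} [Fintype ι] (B : ι → ι → ℝ) : Set (ι → ℝ) :=
  {x | ∃ z : ι → ℤ, x = ∑ i, (z i : ℝ) • B i}

/-- The `p`-th compound lattice `Λ_p`: the ℤ-span of all exterior products of
`p` lattice vectors. -/
def compoundLattice (n p : ℕ) (L : Set (Fin n → ℝ)) : Set (WedgeIdx n p → ℝ) :=
  (Submodule.span ℤ
    {w : WedgeIdx n p → ℝ | ∃ v : Fin p → Fin n → ℝ,
      (∀ i, v i ∈ L) ∧ w = wedge n p v} : Set (WedgeIdx n p → ℝ))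

/-!
The `p × p` minors of `B` form the `p`-th compound matrix `C_p(B)`, whose rows are wedges of rows
of `B`. By Cauchy–Binet, the wedge of `p` integer combinations of rows of `B` is an integer
combination of the rows of `C_p(B)`, so these rows form a basis of `Λ_p`; Cauchy–Binet also makes
`C_p` multiplicative. Hence `det C_p(B) = (det B) ^ C(n-1, p-1)` (Sylvester–Franke) reduces to
diagonal matrices, where each index lies in `C(n-1, p-1)` of the `p`-subsets, and to transvections
`t(c)`: there `f(c) = det C_p(t(c))` satisfies `f(c) f(-c) = 1` and `f(c)² = f(2c) = f(c)`, the
last step because `t(2c)` is conjugate to `t(c)` by a diagonal matrix.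
-/

open Finset Matrix Equiv

variable {m n p : ℕ} {R : Type*} [CommRing R]

def WedgeIdx.orderEmb (s : WedgeIdx n p) : Fin p ↪o Fin n := s.1.orderEmbOfFin s.2

theorem WedgeIdx.range_orderEmb (s : WedgeIdx n p) : Set.range s.orderEmb = s.1 :=
  Finset.range_orderEmbOfFin _ _

theorem Matrix.det_mul_eq_sum_det_submatrix_mul_prod (A : Matrix (Fin p) (Fin n) R)
    (B : Matrix (Fin n) (Fin p) R) :
    (A * B).det = ∑ f : Fin p → Fin n, (A.submatrix id f).det * ∏ i, B (f i) i := by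
  simp only [det_apply', mul_apply, prod_univ_sum, mul_sum, Fintype.piFinset_univ, sum_mul,
    prod_mul_distrib]
  rw [sum_comm]
  simp only [submatrix_apply, id, mul_assoc]

theorem sum_injective_eq_sum_orderEmb_comp_perm {M : Type*} [AddCommMonoid M]
    (g : (Fin p → Fin n) → M) :
    ∑ f with Function.Injective f, g f =
      ∑ s : WedgeIdx n p, ∑ σ : Perm (Fin p), g (s.orderEmb ∘ σ) := by
  rw [← Fintype.sum_prod_type']
  symm
  refine sum_bij (fun x _ => x.1.orderEmb ∘ x.2) (fun x _ => ?_) (fun x _ y _ hxy => ?_)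
    (fun f hf => ?_) (fun _ _ => rfl)
  · simpa using x.1.orderEmb.injective.comp x.2.injective
  · have hs : x.1 = y.1 := by
      apply Subtype.ext
      have := congrArg Set.range hxy
      rwa [x.2.surjective.range_comp, y.2.surjective.range_comp, x.1.range_orderEmb,
        y.1.range_orderEmb, Finset.coe_inj] at this
    obtain ⟨s, σ⟩ := x
    obtain ⟨t, ρ⟩ := y
    subst hs
    simp only at hxy
    exact Prod.ext rfl (Equiv.ext fun i => s.orderEmb.injective (congrFun hxy i))
  · have hf : Function.Injective f := by simpa using hf
    let s : WedgeIdx n p := ⟨univ.image f, by rw [card_image_of_injective _ hf]; simp⟩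
    have hsort : f ∘ Tuple.sort f = s.orderEmb :=
      orderEmbOfFin_unique s.2 (fun i => mem_image_of_mem f (mem_univ _))
        ((Tuple.monotone_sort f).strictMono_of_injective (hf.comp (Tuple.sort f).injective))
    refine ⟨(s, (Tuple.sort f)⁻¹), mem_univ _, ?_⟩
    rw [← hsort]
    ext i
    simp

theorem Matrix.det_mul_eq_sum_det_submatrix_mul_det_submatrix (A : Matrix (Fin p) (Fin n) R)
    (B : Matrix (Fin n) (Fin p) R) :
    (A * B).det = ∑ s : WedgeIdx n p,
      (A.submatrix id s.orderEmb).det * (B.submatrix s.orderEmb id).det := by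
  rw [det_mul_eq_sum_det_submatrix_mul_prod, ← sum_filter_of_ne (p := Function.Injective)]
  · rw [sum_injective_eq_sum_orderEmb_comp_perm]
    refine sum_congr rfl fun s _ => ?_
    rw [det_apply' (B.submatrix _ _), mul_sum]
    refine sum_congr rfl fun σ _ => ?_
    rw [show A.submatrix id (s.orderEmb ∘ σ) = (A.submatrix id s.orderEmb).submatrix id σ from
      rfl, det_permute']
    simp only [submatrix_apply, Function.comp_apply, id]
    ring
  · intro f _ hf
    by_contra hinj
    obtain ⟨i, j, hij, hne⟩ := Function.not_injective_iff.1 hinj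
    exact hf (by rw [det_zero_of_column_eq hne (fun k => by simp [hij]), zero_mul])

/-- The matrix of `⋀ᵖ M` in the bases `e_{i₁} ∧ ⋯ ∧ e_{i_p}`, `i₁ < ⋯ < i_p`. -/
def Matrix.compound (p : ℕ) (M : Matrix (Fin m) (Fin n) R) :
    Matrix (WedgeIdx m p) (WedgeIdx n p) R :=
  of fun s t => (M.submatrix s.orderEmb t.orderEmb).det

theorem Matrix.compound_mul {k : ℕ} (M : Matrix (Fin m) (Fin k) R)
    (N : Matrix (Fin k) (Fin n) R) :
    compound p (M * N) = compound p M * compound p N := by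
  ext s t
  rw [compound, of_apply, submatrix_mul _ _ _ id _ Function.bijective_id,
    det_mul_eq_sum_det_submatrix_mul_det_submatrix]
  rfl

theorem Matrix.compound_diagonal (d : Fin n → R) :
    compound p (diagonal d) = diagonal fun s => ∏ i ∈ s.1, d i := by
  ext s t
  rw [compound, of_apply]
  by_cases hst : s = t
  · subst hst
    rw [submatrix_diagonal _ _ s.orderEmb.injective, det_diagonal, diagonal_apply_eq,
      ← map_orderEmbOfFin_univ s.1 s.2, prod_map]
    rfl
  · rw [diagonal_apply_ne _ hst]
    have hsub : ¬ s.1 ⊆ t.1 := fun h =>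
      hst (Subtype.ext (eq_of_subset_of_card_le h (by rw [s.2, t.2])))
    obtain ⟨a, has, hat⟩ := not_subset.1 hsub
    obtain ⟨j, rfl⟩ : a ∈ Set.range s.orderEmb := by rwa [s.range_orderEmb]
    refine det_eq_zero_of_row_eq_zero j fun k => diagonal_apply_ne _ fun h => hat ?_
    rw [h]
    exact orderEmbOfFin_mem _ _ _

theorem Matrix.compound_one : compound p (1 : Matrix (Fin n) (Fin n) R) = 1 := by
  rw [← diagonal_one, compound_diagonal]
  simp

theorem card_filter_mem_wedgeIdx (hp : 1 ≤ p) (i : Fin n) :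
    #{s : WedgeIdx n p | i ∈ s.1} = (n - 1).choose (p - 1) := by
  have h := card_filter_powersetCard_subset {i} univ p (subset_univ _) (by simpa using hp)
  rw [card_singleton, card_univ, Fintype.card_fin] at h
  rw [← h]
  refine card_bij (fun s _ => s.1) (fun s hs => ?_) (fun _ _ _ _ => Subtype.ext) (fun u hu => ?_)
  · simpa [mem_powersetCard, s.2] using hs
  · simp only [mem_filter, mem_powersetCard, singleton_subset_iff] at hu
    exact ⟨⟨u, hu.1.2⟩, by simpa using hu.2, rfl⟩

theorem Matrix.det_compound_diagonal (hp : 1 ≤ p) (d : Fin n → R) :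
    (compound p (diagonal d)).det = (diagonal d).det ^ (n - 1).choose (p - 1) := by
  rw [compound_diagonal, det_diagonal, det_diagonal, ← prod_pow]
  calc ∏ s : WedgeIdx n p, ∏ i ∈ s.1, d i = ∏ i, ∏ s : WedgeIdx n p with i ∈ s.1, d i :=
        prod_comm' (by simp)
    _ = _ := prod_congr rfl fun i _ => by rw [prod_const, card_filter_mem_wedgeIdx hp]

section Field

variable {𝕜 : Type*} [Field 𝕜]

theorem Matrix.diagonal_mul_transvection_mul_diagonal {i j : Fin n} (hij : i ≠ j) (a c : 𝕜)
    (ha : a ≠ 0) :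
    diagonal (Function.update 1 i a) * transvection i j c * diagonal (Function.update 1 i a⁻¹) =
      transvection i j (a * c) := by
  ext k l
  rw [mul_diagonal, diagonal_mul]
  simp only [transvection, add_apply, one_apply, single_apply, Function.update_apply, Pi.one_apply]
  split_ifs <;> grind

theorem Matrix.diagonal_update_inv_mul_diagonal_update (i : Fin n) {a : 𝕜} (ha : a ≠ 0) :
    diagonal (Function.update 1 i a⁻¹) * diagonal (Function.update 1 i a) = 1 := by
  rw [diagonal_mul_diagonal, ← diagonal_one]
  congr 1
  funext k
  by_cases hk : k = i <;> simp [hk, ha]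

theorem Matrix.det_compound_transvection [NeZero (2 : 𝕜)] {i j : Fin n} (hij : i ≠ j)
    (c : 𝕜) :
    (compound p (transvection i j c)).det = 1 := by
  set f : 𝕜 → 𝕜 := fun c => (compound p (transvection i j c)).det
  have hadd : ∀ a b, f a * f b = f (a + b) := fun a b => by
    simp only [f]
    rw [← det_mul, ← compound_mul, transvection_mul_transvection_same _ _ hij]
  have hconj : f (2 * c) = f c := by
    simp only [f]
    rw [← diagonal_mul_transvection_mul_diagonal hij 2 c two_ne_zero, compound_mul, compound_mul,
      det_mul, det_mul, mul_comm, ← mul_assoc, ← det_mul, ← compound_mul,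
      diagonal_update_inv_mul_diagonal_update i two_ne_zero, compound_one, det_one, one_mul]
  have hunit : f c * f (-c) = 1 := by
    rw [hadd, add_neg_cancel]
    simp [f, compound_one]
  have hidem : f c * f c = f c := by rw [hadd, ← two_mul, hconj]
  exact mul_left_cancel₀ (left_ne_zero_of_mul_eq_one hunit) (hidem.trans (mul_one _).symm)

theorem Matrix.det_compound [NeZero (2 : 𝕜)] (hp : 1 ≤ p) (M : Matrix (Fin n) (Fin n) 𝕜) :
    (compound p M).det = M.det ^ (n - 1).choose (p - 1) := by
  refine diagonal_transvection_induction (fun M => (compound p M).det = M.det ^ _) M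
    (fun d _ => det_compound_diagonal hp d) (fun t => ?_) (fun A B hA hB => ?_)
  · rw [TransvectionStruct.toMatrix, det_compound_transvection t.hij,
      det_transvection_of_ne _ _ t.hij, one_pow]
  · simp only [compound_mul, det_mul, hA, hB, mul_pow]

end Field

theorem latticeOfI_eq_span {ι : Type*} [Fintype ι] (W : ι → ι → ℝ) :
    latticeOfI W = Submodule.span ℤ (Set.range W) := by
  ext x
  simp only [latticeOfI, Set.mem_ofPred_eq, SetLike.mem_coe,
    Submodule.mem_span_range_iff_exists_fun, Int.cast_smul_eq_zsmul, eq_comm]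

theorem row_mem_latticeOfI {ι : Type*} [Fintype ι] [DecidableEq ι] (W : ι → ι → ℝ)
    (i : ι) :
    W i ∈ latticeOfI W :=
  ⟨Pi.single i 1, by simp [Pi.single_apply]⟩

theorem wedge_mul (Z : Matrix (Fin p) (Fin n) ℝ) (B : Matrix (Fin n) (Fin n) ℝ) :
    wedge n p (Z * B) = ∑ t, (Z.submatrix id t.orderEmb).det • compound p B t := by
  funext s
  rw [Finset.sum_apply]
  change ((Z * B).submatrix id s.orderEmb).det = _
  rw [submatrix_mul _ _ _ id _ Function.bijective_id,
    det_mul_eq_sum_det_submatrix_mul_det_submatrix]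
  rfl

theorem compoundLattice_latticeOfI (B : Fin n → Fin n → ℝ) :
    compoundLattice n p (latticeOfI B) = latticeOfI fun s => compound p (of B) s := by
  rw [compoundLattice, latticeOfI_eq_span fun s => compound p (of B) s]
  refine congrArg _ (le_antisymm (Submodule.span_le.2 ?_) (Submodule.span_le.2 ?_))
  · rintro _ ⟨v, hv, rfl⟩
    choose z hz using hv
    have hv : v = (of z).map (Int.cast : ℤ → ℝ) * of B := by
      ext i k
      simp [hz i, mul_apply]
    rw [hv, wedge_mul]
    refine Submodule.sum_mem _ fun t _ => ?_
    rw [submatrix_map, ← Int.cast_det, Int.cast_smul_eq_zsmul]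
    exact Submodule.smul_mem _ _ (Submodule.subset_span ⟨t, rfl⟩)
  · rintro _ ⟨s, rfl⟩
    exact Submodule.subset_span
      ⟨(of B).submatrix s.orderEmb id, fun i => row_mem_latticeOfI B _, rfl⟩

theorem compound_lattice_det_general
    (n p : ℕ) (hp : 1 ≤ p)
    (B : Fin n → Fin n → ℝ) :
    ∃ W : WedgeIdx n p → WedgeIdx n p → ℝ,
      compoundLattice n p (latticeOfI B) = latticeOfI W ∧
      |(Matrix.of W).det| = |(Matrix.of B).det| ^ (Nat.choose (n - 1) (p - 1)) :=
  ⟨compound p (of B), compoundLattice_latticeOfI B, by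
    rw [← abs_pow, ← det_compound hp]
    rfl⟩

/-- Determinant of compound lattices: `d(Λ_p) = d(Λ)^P` with `P = C(n-1,p-1)`:
the compound lattice has a basis whose determinant has the right absolute
value. -/
theorem compound_lattice_det
    (n p : ℕ) (hp : 1 ≤ p) (hpn : p ≤ n - 1)
    (B : Fin n → Fin n → ℝ) (hB : (Matrix.of B).det ≠ 0) :
    ∃ W : WedgeIdx n p → WedgeIdx n p → ℝ,
      compoundLattice n p (latticeOfI B) = latticeOfI W ∧
      |(Matrix.of W).det| = |(Matrix.of B).det| ^ (Nat.choose (n - 1) (p - 1)) :=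
  compound_lattice_det_general n p hp B
end

section
/- (Mahler's compound volume estimate) For each n and 1 ≤ p ≤ n−1 there are constants c_1(n,p), c_2(n,p) > 0 such that for every symmetric convex body C in ℝ^n, the p-th compound C_p (the convex hull in ℝ^N, N = C(n,p), of all x_1∧⋯∧x_p with x_i ∈ C) satisfies c_1(n,p) ≤ V(C_p)·V(C)^{−P} ≤ c_2(n,p), where P = C(n−1,p−1). -/
/-!
Pick columns `b₁, …, bₙ ∈ C` maximising `|det|` (a cruder substitute for John's position). By
Cramer's rule every point of `C` has coordinates in `[-1, 1]` with respect to this basis, so with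
`T = (b₁ ⋯ bₙ)` the body `S = T⁻¹ C` contains `±eᵢ`, hence the cube of radius `1/n`, and lies in
the unit cube. Accordingly `S_p` contains `±e_s` for every `p`-subset `s`, hence the cube of
radius `1 / C(n,p)`, and lies in the cube of radius `p!`. Finally `x₁ ∧ ⋯ ∧ x_p` transforms under
`T` by the compound matrix `Λᵖ T` (Cauchy–Binet), whose determinant is `(det T)^P`
(Sylvester–Franke), so `V(C) = |det T| V(S)` and `V(C_p) = |det T|^P V(S_p)`.
-/

open Pointwise MeasureTheory

/-- The `p`-th compound body `C_p`: the convex hull of all exterior products of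
`p` points of `C`. -/
noncomputable def compoundBody (n p : ℕ) (C : Set (Fin n → ℝ)) : Set (WedgeIdx n p → ℝ) :=
  convexHull ℝ {w : WedgeIdx n p → ℝ | ∃ v : Fin p → Fin n → ℝ,
    (∀ i, v i ∈ C) ∧ w = wedge n p v}


namespace WedgeIdx

variable {n p : ℕ}

noncomputable def emb (s : WedgeIdx n p) : Fin p ↪o Fin n := s.1.orderEmbOfFin s.2

theorem emb_mem (s : WedgeIdx n p) (j : Fin p) : s.emb j ∈ s.1 :=
  s.1.orderEmbOfFin_mem s.2 j

theorem range_emb (s : WedgeIdx n p) : Set.range s.emb = s.1 :=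
  s.1.range_orderEmbOfFin s.2

theorem exists_mem_notMem_of_ne {s t : WedgeIdx n p} (h : s ≠ t) : ∃ a ∈ s.1, a ∉ t.1 := by
  by_contra! hst
  exact h (Subtype.ext (Finset.eq_of_subset_of_card_le hst (t.2.trans s.2.symm).le))

theorem emb_comp_injective :
    Function.Injective fun q : WedgeIdx n p × Equiv.Perm (Fin p) => q.1.emb ∘ q.2 := by
  rintro ⟨s, σ⟩ ⟨t, τ⟩ h
  have hst : s = t := by
    have hrange := congrArg Set.range h
    simp only [σ.surjective.range_comp, τ.surjective.range_comp, range_emb] at hrange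
    exact Subtype.ext (Finset.coe_injective hrange)
  subst hst
  simp only [Prod.mk.injEq, true_and]
  exact Equiv.ext fun i => s.emb.injective (congrFun h i)

theorem exists_emb_comp_eq {f : Fin p → Fin n} (hf : Function.Injective f) :
    ∃ q : WedgeIdx n p × Equiv.Perm (Fin p), q.1.emb ∘ q.2 = f := by
  classical
  let s : WedgeIdx n p := ⟨Finset.univ.image f, by simp [Finset.card_image_of_injective _ hf]⟩
  have hmem (i : Fin p) : f i ∈ Set.range s.emb := by simp [range_emb, s]
  choose σ hσ using hmem
  have hσ_inj : Function.Injective σ := fun i j h => hf (by rw [← hσ i, ← hσ j, h])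
  exact ⟨(s, Equiv.ofBijective σ hσ_inj.bijective_of_finite), funext hσ⟩

theorem sum_injective_eq_sum_sum_perm {β : Type*} [AddCommMonoid β]
    (g : (Fin p → Fin n) → β) :
    ∑ f with Function.Injective f, g f =
      ∑ s : WedgeIdx n p, ∑ σ : Equiv.Perm (Fin p), g (s.emb ∘ σ) := by
  rw [← Fintype.sum_prod_type']
  symm
  refine Finset.sum_bij (fun q _ => q.1.emb ∘ q.2) (fun q _ => ?_)
    (fun q _ r _ h => emb_comp_injective h) (fun f hf => ?_) (fun _ _ => rfl)
  · simpa using q.1.emb.injective.comp q.2.injective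
  · obtain ⟨q, hq⟩ := exists_emb_comp_eq (Finset.mem_filter.mp hf).2
    exact ⟨q, Finset.mem_univ _, hq⟩

open Finset in
theorem card_filter_mem (hp : 1 ≤ p) (a : Fin n) :
    #{s : WedgeIdx n p | a ∈ s.1} = (n - 1).choose (p - 1) := by
  classical
  have h := card_filter_powersetCard_subset {a} univ p (by simp) (by simpa using hp)
  simp only [card_singleton, card_univ, Fintype.card_fin, singleton_subset_iff] at h
  rw [← h, ← card_map (Function.Embedding.subtype _)]
  congr 1
  ext u
  simp [mem_powersetCard, and_comm]

theorem prod_prod_mem_eq_prod_pow {M : Type*} [CommMonoid M] (hp : 1 ≤ p) (d : Fin n → M) :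
    ∏ s : WedgeIdx n p, ∏ a ∈ s.1, d a = (∏ a, d a) ^ (n - 1).choose (p - 1) := by
  rw [Finset.prod_comm' (t' := Finset.univ) (s' := fun a => {s : WedgeIdx n p | a ∈ s.1})
    (by simp), ← Finset.prod_pow]
  simp [card_filter_mem hp]

end WedgeIdx

namespace Matrix

variable {R : Type*} [CommRing R]

theorem det_mul_eq_sum_prod_mul_det {m : Type*} [Fintype m] {p : ℕ}
    (A : Matrix (Fin p) m R) (B : Matrix m (Fin p) R) :
    (A * B).det = ∑ f : Fin p → m, (∏ i, A i (f i)) * (B.submatrix f id).det := by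
  classical
  have hrows : A * B = fun i => ∑ k, A i k • B k := by
    ext i j
    simp [mul_apply]
  change detRowAlternating.toMultilinearMap _ = _
  rw [hrows, MultilinearMap.map_sum]
  simp only [MultilinearMap.map_smul_univ, smul_eq_mul]
  rfl

/-- The Cauchy–Binet formula. -/
theorem det_mul_eq_sum_det_mul_det {n p : ℕ} (A : Matrix (Fin p) (Fin n) R)
    (B : Matrix (Fin n) (Fin p) R) :
    (A * B).det = ∑ s : WedgeIdx n p, (A.submatrix id s.emb).det * (B.submatrix s.emb id).det := by
  classical
  rw [det_mul_eq_sum_prod_mul_det, ← Finset.sum_filter_of_ne (p := Function.Injective)]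
  · rw [WedgeIdx.sum_injective_eq_sum_sum_perm]
    refine Finset.sum_congr rfl fun s _ => ?_
    rw [← det_transpose (A.submatrix id s.emb), det_apply, Finset.sum_mul]
    refine Finset.sum_congr rfl fun σ _ => ?_
    rw [show B.submatrix (s.emb ∘ σ) id = (B.submatrix s.emb id).submatrix σ id from rfl,
      det_permute, Units.smul_def]
    simp only [transpose_apply, submatrix_apply, id, Function.comp_apply, zsmul_eq_mul]
    ring
  · intro f _ hf
    by_contra hinj
    obtain ⟨i, j, hij, hne⟩ := Function.not_injective_iff.mp hinj
    exact hf (by rw [det_zero_of_row_eq hne (by ext; simp [hij]), mul_zero])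

theorem det_updateCol_mulVec {ι : Type*} [Fintype ι] [DecidableEq ι] (T : Matrix ι ι R)
    (x : ι → R) (k : ι) : (T.updateCol k (T *ᵥ x)).det = T.det * x k := by
  rw [← cramer_apply, cramer_eq_adjugate_mulVec, mulVec_mulVec, adjugate_mul, smul_mulVec,
    one_mulVec, Pi.smul_apply, smul_eq_mul]

theorem det_eq_one_of_ne_zero_imp_lt {ι : Type*} [Fintype ι] [DecidableEq ι] (M : Matrix ι ι R)
    (b : ι → ℕ) (hdiag : ∀ i, M i i = 1) (hlt : ∀ i j, i ≠ j → M i j ≠ 0 → b i < b j) :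
    M.det = 1 := by
  rw [det_apply', Finset.sum_eq_single (1 : Equiv.Perm ι) _ (by simp)]
  · simp [hdiag]
  · intro σ _ hσ
    suffices hzero : ∏ i, M (σ i) i = 0 by rw [hzero, mul_zero]
    by_contra hne
    have hM (i : ι) : M (σ i) i ≠ 0 := fun h0 => hne (Finset.prod_eq_zero (Finset.mem_univ i) h0)
    -- a nonzero term of a permutation `σ ≠ 1` would strictly decrease `∑ i, b i`
    have hle (i : ι) : b (σ i) ≤ b i := by
      by_cases hi : σ i = i
      · rw [hi]
      · exact (hlt _ _ hi (hM i)).le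
    obtain ⟨i₀, hi₀⟩ : ∃ i, σ i ≠ i := by
      by_contra! h
      exact hσ (Equiv.ext h)
    have hsum : ∑ i, b (σ i) < ∑ i, b i :=
      Finset.sum_lt_sum (fun i _ => hle i) ⟨i₀, Finset.mem_univ _, hlt _ _ hi₀ (hM i₀)⟩
    rw [Equiv.sum_comp σ b] at hsum
    exact lt_irrefl _ hsum

variable {n p : ℕ}

theorem eq_of_transvection_apply_ne_zero {i j a y : Fin n} {c : R} (hay : a ≠ y)
    (h : transvection i j c a y ≠ 0) : a = i ∧ y = j := by
  by_contra hc
  apply h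
  simp only [transvection, add_apply, one_apply_ne hay, single_apply, zero_add]
  exact if_neg fun h' => hc ⟨h'.1.symm, h'.2.symm⟩

theorem transvection_apply_self {i j : Fin n} (hij : i ≠ j) (c : R) (a : Fin n) :
    transvection i j c a a = 1 := by
  simp only [transvection, add_apply, one_apply_eq, single_apply, add_eq_left]
  exact if_neg fun h => hij (h.1.trans h.2.symm)

noncomputable def compound_s15 (p : ℕ) (T : Matrix (Fin n) (Fin n) R) :
    Matrix (WedgeIdx n p) (WedgeIdx n p) R :=
  of fun s t => (T.submatrix s.emb t.emb).det

theorem compound_apply (T : Matrix (Fin n) (Fin n) R) (s t : WedgeIdx n p) :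
    compound_s15 p T s t = (T.submatrix s.emb t.emb).det := rfl

theorem compound_mul_s15 (S T : Matrix (Fin n) (Fin n) R) :
    compound_s15 p (S * T) = compound_s15 p S * compound_s15 p T := by
  ext s t
  rw [compound_apply, submatrix_mul _ _ _ id _ Function.bijective_id, det_mul_eq_sum_det_mul_det,
    mul_apply]
  rfl

theorem det_submatrix_emb_eq_zero_of_row {T : Matrix (Fin n) (Fin n) R} {s t : WedgeIdx n p}
    {a : Fin n} (ha : a ∈ s.1) (h : ∀ y ∈ t.1, T a y = 0) :
    (T.submatrix s.emb t.emb).det = 0 := by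
  obtain ⟨k, rfl⟩ : a ∈ Set.range s.emb := by rwa [WedgeIdx.range_emb]
  exact det_eq_zero_of_row_eq_zero k fun l => h _ (t.emb_mem l)

theorem det_submatrix_emb_eq_zero_of_col {T : Matrix (Fin n) (Fin n) R} {s t : WedgeIdx n p}
    {b : Fin n} (hb : b ∈ t.1) (h : ∀ x ∈ s.1, T x b = 0) :
    (T.submatrix s.emb t.emb).det = 0 := by
  rw [← det_transpose, transpose_submatrix]
  exact det_submatrix_emb_eq_zero_of_row hb h

theorem compound_diagonal_s15 (d : Fin n → R) :
    compound_s15 p (diagonal d) = diagonal fun s : WedgeIdx n p => ∏ a ∈ s.1, d a := by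
  ext s t
  by_cases hst : s = t
  · subst hst
    rw [compound_apply, diagonal_apply_eq, submatrix_diagonal d _ s.emb.injective,
      det_diagonal, ← s.1.map_orderEmbOfFin_univ s.2, Finset.prod_map]
    rfl
  · obtain ⟨a, has, hat⟩ := WedgeIdx.exists_mem_notMem_of_ne hst
    rw [compound_apply, diagonal_apply_ne _ hst]
    exact det_submatrix_emb_eq_zero_of_row has fun y hy =>
      diagonal_apply_ne _ fun hay => hat (hay ▸ hy)

theorem compound_one_s15 : compound_s15 p (1 : Matrix (Fin n) (Fin n) R) = 1 := by
  rw [← diagonal_one, compound_diagonal_s15]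
  simp

/- Off the diagonal, a nonzero minor of `transvection i j c` has rows `u ∪ {i}` and columns
`u ∪ {j}` with `i, j ∉ u`, so ordering the `p`-subsets containing `i` but not `j` first makes the
compound unitriangular. Each principal minor is unitriangular for the same reason. -/
theorem det_compound_transvection_s15 {i j : Fin n} (hij : i ≠ j) (c : R) :
    (compound_s15 p (transvection i j c)).det = 1 := by
  refine det_eq_one_of_ne_zero_imp_lt _ (fun s => if i ∈ s.1 ∧ j ∉ s.1 then 0 else 1)
    (fun s => ?_) (fun s t hst hne => ?_)
  · refine det_eq_one_of_ne_zero_imp_lt _ (fun k => if s.emb k = i then 0 else 1)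
      (fun k => transvection_apply_self hij c _) (fun k l hkl hne => ?_)
    obtain ⟨hk, hl⟩ := eq_of_transvection_apply_ne_zero (s.emb.injective.ne hkl) hne
    simp [hk, hl, hij.symm]
  · obtain ⟨a, has, hat⟩ := WedgeIdx.exists_mem_notMem_of_ne hst
    obtain ⟨b, hbt, hbs⟩ := WedgeIdx.exists_mem_notMem_of_ne (Ne.symm hst)
    have hai : a = i := by
      by_contra hai
      exact hne (det_submatrix_emb_eq_zero_of_row has fun y hy => by
        by_contra h
        exact hai (eq_of_transvection_apply_ne_zero (fun hay : a = y => hat (hay ▸ hy)) h).1)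
    have hbj : b = j := by
      by_contra hbj
      exact hne (det_submatrix_emb_eq_zero_of_col hbt fun x hx => by
        by_contra h
        exact hbj (eq_of_transvection_apply_ne_zero (fun hxb : x = b => hbs (hxb ▸ hx)) h).2)
    subst hai hbj
    simp [has, hbs, hat]

/-- The Sylvester–Franke theorem. -/
theorem det_compound_s15 {𝕜 : Type*} [Field 𝕜] (hp : 1 ≤ p) (T : Matrix (Fin n) (Fin n) 𝕜) :
    (compound_s15 p T).det = T.det ^ (n - 1).choose (p - 1) := by
  induction T using diagonal_transvection_induction with
  | hdiag d _ =>
    rw [compound_diagonal_s15, det_diagonal, det_diagonal, WedgeIdx.prod_prod_mem_eq_prod_pow hp]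
  | htransvec t =>
    rw [TransvectionStruct.toMatrix, det_compound_transvection_s15 t.hij,
      det_transvection_of_ne _ _ t.hij, one_pow]
  | hmul A B hA hB => rw [compound_mul_s15, det_mul, det_mul, hA, hB, mul_pow]

end Matrix

open Matrix

theorem smul_mem_segment_neg {E : Type*} [AddCommGroup E] [Module ℝ E] {t : ℝ} (ht : |t| ≤ 1)
    (x : E) : t • x ∈ segment ℝ (-x) x := by
  obtain ⟨h₁, h₂⟩ := abs_le.mp ht
  refine ⟨(1 - t) / 2, (1 + t) / 2, by linarith, by linarith, by ring, ?_⟩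
  rw [smul_neg, neg_add_eq_sub, ← sub_smul]
  congr 1
  ring

theorem closedBall_zero_subset_convexHull {ι : Type*} [Fintype ι] [DecidableEq ι] [Nonempty ι]
    {A : Set (ι → ℝ)} (hA : ∀ i, Pi.single i 1 ∈ A ∧ -Pi.single i 1 ∈ A) :
    Metric.closedBall (0 : ι → ℝ) (1 / Fintype.card ι) ⊆ convexHull ℝ A := by
  intro x hx
  have hN : (0 : ℝ) < Fintype.card ι := Nat.cast_pos.mpr Fintype.card_pos
  have hx_eq : x = ∑ i, (1 / Fintype.card ι : ℝ) • ((Fintype.card ι * x i) • Pi.single i 1) := by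
    simp_rw [smul_smul, ← mul_assoc, one_div, inv_mul_cancel₀ hN.ne', one_mul]
    exact pi_eq_sum_univ' x
  rw [hx_eq]
  refine (convex_convexHull ℝ A).sum_mem (fun _ _ => by positivity) (by simp [hN.ne'])
    fun i _ => segment_subset_convexHull (hA i).2 (hA i).1 (smul_mem_segment_neg ?_ _)
  rw [mem_closedBall_zero_iff, pi_norm_le_iff_of_nonneg (by positivity)] at hx
  rw [abs_mul, abs_of_pos hN, ← le_div_iff₀' hN, ← Real.norm_eq_abs]
  simpa using hx i

theorem toReal_volume_mem_Icc_of_closedBall_subset {ι : Type*} [Fintype ι] {K : Set (ι → ℝ)}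
    {a b : ℝ} (ha : 0 ≤ a) (hinner : Metric.closedBall 0 a ⊆ K)
    (houter : K ⊆ Metric.closedBall 0 b) :
    (volume K).toReal ∈ Set.Icc ((2 * a) ^ Fintype.card ι) ((2 * b) ^ Fintype.card ι) := by
  have hb : 0 ≤ b := by simpa using houter (hinner (Metric.mem_closedBall_self ha))
  have hvol (r : ℝ) (hr : 0 ≤ r) :
      (volume (Metric.closedBall (0 : ι → ℝ) r)).toReal = (2 * r) ^ Fintype.card ι := by
    rw [Real.volume_pi_closedBall _ hr, ENNReal.toReal_ofReal (by positivity)]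
  rw [← hvol a ha, ← hvol b hb]
  have hfinite : volume (Metric.closedBall (0 : ι → ℝ) b) ≠ ⊤ := measure_closedBall_lt_top.ne
  exact ⟨ENNReal.toReal_mono (measure_ne_top_of_subset houter hfinite) (measure_mono hinner),
    ENNReal.toReal_mono hfinite (measure_mono houter)⟩

theorem volume_mulVec_image {ι : Type*} [Fintype ι] [DecidableEq ι] (M : Matrix ι ι ℝ)
    (S : Set (ι → ℝ)) : volume ((M *ᵥ ·) '' S) = ENNReal.ofReal |M.det| * volume S := by
  have h := Measure.addHaar_image_linearMap volume (toLin' M) S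
  rwa [LinearMap.det_toLin', toLin'_apply', coe_mulVecLin] at h

/-- `T` has columns in `C` maximising `|det|`; by Cramer's rule the coordinates of `T⁻¹ x`,
`x ∈ C`, are ratios of such determinants, hence at most `1` in absolute value. -/
theorem IsCompact.exists_auerbach_matrix {n : ℕ} {C : Set (Fin n → ℝ)} (hC : IsCompact C)
    (h0 : (0 : Fin n → ℝ) ∈ interior C) :
    ∃ T : Matrix (Fin n) (Fin n) ℝ, T.det ≠ 0 ∧ (∀ i, T *ᵥ Pi.single i 1 ∈ C) ∧
      (T *ᵥ ·) ⁻¹' C ⊆ Metric.closedBall 0 1 := by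
  set K : Set (Matrix (Fin n) (Fin n) ℝ) := Set.univ.pi fun _ => C
  obtain ⟨B, hB, hmax⟩ : ∃ B ∈ K, IsMaxOn (fun B : Matrix (Fin n) (Fin n) ℝ => |B.det|) K B :=
    (isCompact_univ_pi fun _ => hC).exists_isMaxOn ⟨0, fun _ _ => interior_subset h0⟩
      continuous_id.matrix_det.abs.continuousOn
  have hBC (i : Fin n) : B i ∈ C := hB i (Set.mem_univ i)
  have hdet : B.det ≠ 0 := by
    obtain ⟨ε, hε, hball⟩ := Metric.mem_nhds_iff.mp (mem_interior_iff_mem_nhds.mp h0)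
    have hsmall : (ε / 2) • (1 : Matrix (Fin n) (Fin n) ℝ) ∈ K := by
      intro i _
      apply hball
      rw [Metric.mem_ball, dist_zero_right]
      refine lt_of_le_of_lt ((pi_norm_le_iff_of_nonneg (half_pos hε).le).mpr fun j => ?_)
        (half_lt_self hε)
      rcases eq_or_ne i j with rfl | hij
      · simp [abs_of_pos hε]
      · simpa [one_apply_ne hij] using (half_pos hε).le
    have hle : |((ε / 2) • (1 : Matrix (Fin n) (Fin n) ℝ)).det| ≤ |B.det| := hmax hsmall
    rw [det_smul, det_one, mul_one, Fintype.card_fin] at hle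
    exact abs_pos.mp ((by positivity : (0 : ℝ) < |(ε / 2) ^ n|).trans_le hle)
  refine ⟨Bᵀ, by rwa [det_transpose], fun i => ?_, fun x hx => ?_⟩
  · rw [mulVec_single_one]
    exact hBC i
  · rw [mem_closedBall_zero_iff, pi_norm_le_iff_of_nonneg zero_le_one]
    intro k
    have hupdate : B.updateRow k (Bᵀ *ᵥ x) ∈ K := by
      intro i _
      rcases eq_or_ne i k with rfl | hik
      · rwa [updateRow_self]
      · rw [updateRow_ne hik]
        exact hBC i
    have hcramer : |(B.updateRow k (Bᵀ *ᵥ x)).det| ≤ |B.det| := hmax hupdate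
    rw [← det_transpose, ← updateCol_transpose, det_updateCol_mulVec, det_transpose,
      abs_mul] at hcramer
    rw [Real.norm_eq_abs]
    exact le_of_mul_le_mul_left (by simpa using hcramer) (abs_pos.mpr hdet)

section Wedge

variable {n p : ℕ}

theorem wedge_apply (v : Fin p → Fin n → ℝ) (s : WedgeIdx n p) :
    wedge n p v s = (of fun i j => v i (s.emb j)).det := by
  simp [wedge, WedgeIdx.emb]

theorem wedge_mulVec (T : Matrix (Fin n) (Fin n) ℝ) (v : Fin p → Fin n → ℝ) :
    wedge n p (fun i => T *ᵥ v i) = compound_s15 p T *ᵥ wedge n p v := by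
  ext s
  have hfactor : (of fun i j => (T *ᵥ v i) (s.emb j)) = of v * Tᵀ.submatrix id s.emb := by
    ext i j
    simp [mul_apply, mulVec, dotProduct, mul_comm]
  rw [wedge_apply, hfactor, det_mul_eq_sum_det_mul_det, mulVec, dotProduct]
  refine Finset.sum_congr rfl fun t _ => ?_
  rw [mul_comm, wedge_apply, compound_apply, ← det_transpose (T.submatrix _ _)]
  rfl

theorem wedge_single (s : WedgeIdx n p) :
    wedge n p (fun i => Pi.single (s.emb i) 1) = Pi.single s 1 := by
  ext t
  rw [wedge_apply]
  simp_rw [← one_eq_pi_single (α := ℝ)]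
  change compound_s15 p (1 : Matrix (Fin n) (Fin n) ℝ) s t = _
  rw [compound_one_s15, one_eq_pi_single]

theorem wedge_update_neg (v : Fin p → Fin n → ℝ) (k : Fin p) :
    wedge n p (Function.update v k (-v k)) = -wedge n p v := by
  ext s
  set M : Matrix (Fin p) (Fin p) ℝ := of fun i j => v i (s.emb j)
  have hrow : (of fun i j => Function.update v k (-v k) i (s.emb j)) =
      M.updateRow k ((-1 : ℝ) • M k) := by
    ext i j
    rcases eq_or_ne i k with rfl | hik
    · simp [M]
    · simp [M, hik]
  rw [wedge_apply, hrow, det_updateRow_smul, updateRow_eq_self, neg_one_mul, Pi.neg_apply,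
    wedge_apply]

theorem compoundBody_eq_convexHull_image (C : Set (Fin n → ℝ)) :
    compoundBody n p C = convexHull ℝ (wedge n p '' Set.univ.pi fun _ => C) := by
  rw [compoundBody]
  congr 1
  ext w
  simp only [Set.mem_ofPred_eq, Set.mem_image, Set.mem_univ_pi]
  exact exists_congr fun v => and_congr_right fun _ => eq_comm

theorem compoundBody_mulVec_image (T : Matrix (Fin n) (Fin n) ℝ) (C : Set (Fin n → ℝ)) :
    compoundBody n p ((T *ᵥ ·) '' C) = (compound_s15 p T *ᵥ ·) '' compoundBody n p C := by
  have himage : wedge n p '' (Set.univ.pi fun _ => (T *ᵥ ·) '' C)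
      = (compound_s15 p T *ᵥ ·) '' (wedge n p '' Set.univ.pi fun _ => C) := by
    rw [← Set.piMap_image_univ_pi, Set.image_image, Set.image_image]
    exact Set.image_congr fun v _ => wedge_mulVec T v
  rw [compoundBody_eq_convexHull_image, compoundBody_eq_convexHull_image, himage]
  exact ((compound_s15 p T).mulVecLin.image_convexHull _).symm

theorem volume_compoundBody_mulVec_image (hp : 1 ≤ p) (T : Matrix (Fin n) (Fin n) ℝ)
    (C : Set (Fin n → ℝ)) :
    volume (compoundBody n p ((T *ᵥ ·) '' C))
      = ENNReal.ofReal |T.det| ^ (n - 1).choose (p - 1) * volume (compoundBody n p C) := by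
  rw [compoundBody_mulVec_image, volume_mulVec_image, det_compound_s15 hp, abs_pow,
    ENNReal.ofReal_pow (abs_nonneg _)]

theorem compoundBody_subset_closedBall {C : Set (Fin n → ℝ)} {r : ℝ} (hr : 0 ≤ r)
    (hC : C ⊆ Metric.closedBall 0 r) :
    compoundBody n p C ⊆ Metric.closedBall 0 (p.factorial * r ^ p) := by
  refine convexHull_min ?_ (convex_closedBall _ _)
  rintro _ ⟨v, hv, rfl⟩
  rw [mem_closedBall_zero_iff, pi_norm_le_iff_of_nonneg (by positivity)]
  intro s
  rw [wedge_apply, Real.norm_eq_abs]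
  simpa using det_le (abv := AbsoluteValue.abs) (A := of fun i j => v i (s.emb j)) (x := r)
    fun i j => (norm_le_pi_norm (v i) _).trans (mem_closedBall_zero_iff.mp (hC (hv i)))

theorem closedBall_subset_compoundBody (hp : 1 ≤ p) (hpn : p ≤ n) {C : Set (Fin n → ℝ)}
    (hsymm : C = -C) (hsingle : ∀ i, Pi.single i 1 ∈ C) :
    Metric.closedBall 0 (1 / n.choose p) ⊆ compoundBody n p C := by
  have : Nonempty (WedgeIdx n p) := Fintype.card_pos_iff.mp (by simp [Nat.choose_pos hpn])
  have hcard : Fintype.card (WedgeIdx n p) = n.choose p := by simp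
  rw [compoundBody_eq_convexHull_image, ← hcard]
  refine closedBall_zero_subset_convexHull fun s => ⟨?_, ?_⟩
  · exact ⟨_, fun i _ => hsingle _, wedge_single s⟩
  · set v : Fin p → Fin n → ℝ := fun i => Pi.single (s.emb i) 1
    refine ⟨Function.update v ⟨0, hp⟩ (-v ⟨0, hp⟩), fun i _ => ?_, ?_⟩
    · rcases eq_or_ne i ⟨0, hp⟩ with rfl | hi
      · rw [Function.update_self, hsymm, Set.neg_mem_neg]
        exact hsingle _
      · rw [Function.update_of_ne hi]
        exact hsingle _
    · rw [wedge_update_neg, wedge_single]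

end Wedge

theorem pow_mul_mem_Icc_div_pow_mul_pow {d s t α₁ α₂ κ₁ κ₂ : ℝ} (P : ℕ) (hd : 0 ≤ d)
    (hα₁ : 0 < α₁) (hκ₁ : 0 ≤ κ₁) (hs : s ∈ Set.Icc α₁ α₂) (ht : t ∈ Set.Icc κ₁ κ₂) :
    d ^ P * t ∈ Set.Icc (κ₁ / α₂ ^ P * (d * s) ^ P) (κ₂ / α₁ ^ P * (d * s) ^ P) := by
  obtain ⟨hs₁, hs₂⟩ := hs
  obtain ⟨ht₁, ht₂⟩ := ht
  have hs₀ : 0 < s := hα₁.trans_le hs₁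
  have hdP : 0 ≤ d ^ P := pow_nonneg hd P
  constructor
  · calc κ₁ / α₂ ^ P * (d * s) ^ P = d ^ P * (κ₁ * (s ^ P / α₂ ^ P)) := by ring
      _ ≤ d ^ P * (κ₁ * 1) := by
        gcongr
        exact div_le_one_of_le₀ (pow_le_pow_left₀ hs₀.le hs₂ P) (pow_nonneg (hs₀.le.trans hs₂) P)
      _ ≤ d ^ P * t := by rw [mul_one]; exact mul_le_mul_of_nonneg_left ht₁ hdP
  · calc d ^ P * t ≤ d ^ P * (κ₂ * 1) := by rw [mul_one]; exact mul_le_mul_of_nonneg_left ht₂ hdP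
      _ ≤ d ^ P * (κ₂ * (s ^ P / α₁ ^ P)) := by
        gcongr
        · exact hκ₁.trans (ht₁.trans ht₂)
        · exact (one_le_div₀ (by positivity)).mpr (pow_le_pow_left₀ hα₁.le hs₁ P)
      _ = κ₂ / α₁ ^ P * (d * s) ^ P := by ring

/-- Mahler's compound volume estimate: there are constants
`c₁(n,p), c₂(n,p) > 0` with `c₁ ≤ V(C_p)·V(C)^{-P} ≤ c₂`, `P = C(n-1,p-1)`,
for every symmetric convex body `C` in `ℝⁿ`. -/
theorem mahler_compound_volume_estimate
    (n p : ℕ) (hp : 1 ≤ p) (hpn : p ≤ n - 1) :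
    ∃ c₁ c₂ : ℝ, 0 < c₁ ∧ 0 < c₂ ∧
      ∀ C : Set (Fin n → ℝ),
        IsCompact C → Convex ℝ C → C = -C → (0 : Fin n → ℝ) ∈ interior C →
        c₁ * (volume C).toReal ^ (Nat.choose (n - 1) (p - 1)) ≤
            (volume (compoundBody n p C)).toReal ∧
        (volume (compoundBody n p C)).toReal ≤
            c₂ * (volume C).toReal ^ (Nat.choose (n - 1) (p - 1)) := by
  have : Nonempty (Fin n) := ⟨⟨0, by omega⟩⟩
  have hn : (0 : ℝ) < n := by exact_mod_cast (by omega : 0 < n)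
  have hN : (0 : ℝ) < n.choose p := by exact_mod_cast Nat.choose_pos (by omega)
  refine ⟨(2 * (1 / n.choose p)) ^ n.choose p / ((2 * 1) ^ n) ^ (n - 1).choose (p - 1),
    (2 * (p.factorial * 1 ^ p)) ^ n.choose p / ((2 * (1 / n)) ^ n) ^ (n - 1).choose (p - 1),
    by positivity, by positivity, fun C hC hconv hsymm h0 => ?_⟩
  obtain ⟨T, hdet, hsingle, hball⟩ := hC.exists_auerbach_matrix h0
  set S := (T *ᵥ ·) ⁻¹' C
  have hTS : (T *ᵥ ·) '' S = C := Set.image_preimage_eq C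
    (mulVec_surjective_iff_isUnit.mpr ((isUnit_iff_isUnit_det T).mpr hdet.isUnit))
  have hS_symm : S = -S := by
    ext x
    rw [Set.mem_neg, Set.mem_preimage, Set.mem_preimage, mulVec_neg, ← Set.mem_neg, ← hsymm]
  have hS_inner : Metric.closedBall 0 (1 / n) ⊆ S := by
    have hS_conv : Convex ℝ S := hconv.linear_preimage (mulVecLin T)
    rw [← hS_conv.convexHull_eq]
    simpa using closedBall_zero_subset_convexHull (A := S) fun i =>
      ⟨hsingle i, by rw [hS_symm, Set.neg_mem_neg]; exact hsingle i⟩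
  have hvolS := toReal_volume_mem_Icc_of_closedBall_subset (by positivity) hS_inner hball
  have hvolSp := toReal_volume_mem_Icc_of_closedBall_subset (by positivity)
    (closedBall_subset_compoundBody hp (by omega) hS_symm hsingle)
    (compoundBody_subset_closedBall zero_le_one hball)
  rw [Fintype.card_fin] at hvolS
  rw [Fintype.card_finset_len, Fintype.card_fin] at hvolSp
  rw [← hTS, volume_compoundBody_mulVec_image hp, volume_mulVec_image, ENNReal.toReal_mul,
    ENNReal.toReal_mul, ENNReal.toReal_pow, ENNReal.toReal_ofReal (abs_nonneg _)]
  exact pow_mul_mem_Icc_div_pow_mul_pow _ (abs_nonneg _) (by positivity) (by positivity)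
    hvolS hvolSp
end

section
/- (Upper bound for successive minima of compounds) Let C be a symmetric convex body and Λ a lattice in ℝ^n, 1 ≤ p ≤ n−1, N = C(n,p). Let μ_1 ≤ ⋯ ≤ μ_N be the products λ_{i_1}(C,Λ)⋯λ_{i_p}(C,Λ) over increasing p-tuples (i_1,…,i_p), arranged in non-decreasing order. Then λ_i(C_p, Λ_p) ≤ μ_i for i = 1,…,N. -/
open Pointwise

/-!
Choose independent lattice vectors `v₁, …, vₙ` with `vⱼ ∈ (λⱼ + δ) C`, greedily from the definition
of the successive minima. The wedges of their `p`-element subfamilies are linearly independent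
points of `Λ_p`, and by multilinearity the one indexed by `t` lies in `(∏_{j ∈ t} (λⱼ + δ)) C_p`.
For small `δ` the first `k` of them in the order `e` therefore lie in `(μ_k + ε) C_p`, so
`λ_k(C_p, Λ_p) ≤ μ_k + ε` for every `ε > 0`.
-/

open Module Filter Topology

theorem Convex.smul_set_subset_smul_set {E : Type*} [AddCommGroup E] [Module ℝ E] {s : Set E}
    (hs : Convex ℝ s) (h0 : 0 ∈ s) {a b : ℝ} (ha : 0 ≤ a) (hab : a ≤ b) : a • s ⊆ b • s := by
  rintro _ ⟨x, hx, rfl⟩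
  obtain rfl | hb := (ha.trans hab).eq_or_lt
  · obtain rfl : a = 0 := le_antisymm hab ha
    exact ⟨x, hx, rfl⟩
  refine ⟨(a / b) • x, hs.smul_mem_of_zero_mem h0 hx ⟨by positivity, div_le_one_of_le₀ hab hb.le⟩,
    ?_⟩
  change b • ((a / b) • x) = a • x
  rw [smul_smul, mul_div_cancel₀ a hb.ne']

theorem exists_pos_forall_prod_add_lt {ι κ : Type*} [Finite ι] (t : ι → Finset κ) (a : κ → ℝ)
    {M : ℝ} (hM : ∀ i, ∏ j ∈ t i, a j < M) : ∃ δ > 0, ∀ i, ∏ j ∈ t i, (a j + δ) < M := by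
  have hlim : ∀ i, Tendsto (fun δ => ∏ j ∈ t i, (a j + δ)) (𝓝[>] 0) (𝓝 (∏ j ∈ t i, a j)) := by
    intro i
    have hcont : Continuous fun δ : ℝ => ∏ j ∈ t i, (a j + δ) :=
      continuous_finsetProd _ fun j _ => continuous_const.add continuous_id
    simpa using (hcont.tendsto 0).mono_left nhdsWithin_le_nhds
  have hev : ∀ᶠ δ in 𝓝[>] (0 : ℝ), ∀ i, ∏ j ∈ t i, (a j + δ) < M :=
    eventually_all.2 fun i => (hlim i).eventually_lt_const (hM i)
  obtain ⟨δ, hδM, hδ⟩ := (hev.and self_mem_nhdsWithin).exists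
  exact ⟨δ, hδ, hδM⟩

section SuccessiveMinima

variable {E : Type*} [AddCommGroup E] [Module ℝ E]

def succMinSet (C L : Set E) (i : ℕ) : Set ℝ :=
  {lam : ℝ | 0 < lam ∧ ∃ v : Fin i → E, LinearIndependent ℝ v ∧ ∀ j, v j ∈ L ∧ v j ∈ lam • C}

theorem succMin_eq_sInf (C L : Set E) (i : ℕ) : succMin C L i = sInf (succMinSet C L i) := rfl

theorem succMin_nonneg (C L : Set E) (i : ℕ) : 0 ≤ succMin C L i :=
  Real.sInf_nonneg fun _ hx => hx.1.le

theorem succMin_le {C L : Set E} {i : ℕ} {lam : ℝ} (h : lam ∈ succMinSet C L i) :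
    succMin C L i ≤ lam :=
  (succMin_eq_sInf C L i).trans_le (csInf_le ⟨0, fun _ hx => hx.1.le⟩ h)

theorem succMinSet_nonempty [TopologicalSpace E] [ContinuousSMul ℝ E] {C L : Set E}
    (hC : C ∈ 𝓝 0) {i : ℕ} {v : Fin i → E} (hv : LinearIndependent ℝ v) (hvL : ∀ j, v j ∈ L) :
    (succMinSet C L i).Nonempty := by
  obtain ⟨r, hr, hrC⟩ := ((absorbent_nhds_zero (𝕜 := ℝ) hC).absorbs_finite
    (Set.finite_range v)).exists_pos
  exact ⟨r, hr, v, hv, fun j => ⟨hvL j, hrC r (Real.le_norm_self r) ⟨j, rfl⟩⟩⟩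

theorem exists_notMem_span_of_linearIndependent {m : ℕ} {v : Fin m → E} {w : Fin (m + 1) → E}
    (hw : LinearIndependent ℝ w) : ∃ t, w t ∉ Submodule.span ℝ (Set.range v) := by
  by_contra! h
  have hle : Submodule.span ℝ (Set.range w) ≤ Submodule.span ℝ (Set.range v) :=
    Submodule.span_le.2 (Set.range_subset_iff.2 h)
  have : FiniteDimensional ℝ (Submodule.span ℝ (Set.range v)) :=
    FiniteDimensional.span_of_finite ℝ (Set.finite_range v)
  have hw_le := Submodule.finrank_mono hle
  have hv_le := finrank_range_le_card (R := ℝ) v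
  rw [finrank_span_eq_card hw, Fintype.card_fin] at hw_le
  rw [Set.finrank, Fintype.card_fin] at hv_le
  omega

theorem exists_linearIndependent_mem_smul_succMin {C L : Set E} (hC : Convex ℝ C) (h0 : 0 ∈ C)
    {m : ℕ} (hne : ∀ i ≤ m, (succMinSet C L i).Nonempty) {δ : ℝ} (hδ : 0 < δ) :
    ∃ v : Fin m → E, LinearIndependent ℝ v ∧
      ∀ j, v j ∈ L ∧ v j ∈ (succMin C L (j + 1) + δ) • C := by
  induction m with
  | zero => exact ⟨Fin.elim0, linearIndependent_empty_type, fun j => j.elim0⟩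
  | succ m ih =>
    obtain ⟨v, hv, hvLC⟩ := ih fun i hi => hne i (hi.trans m.le_succ)
    obtain ⟨lam, ⟨hlam, w, hw, hwLC⟩, hlt⟩ := exists_lt_of_csInf_lt (hne (m + 1) le_rfl)
      ((succMin_eq_sInf C L (m + 1)).symm.trans_lt (lt_add_of_pos_right _ hδ))
    -- one of the `m + 1` independent vectors found at scale `lam` extends `v`
    obtain ⟨t, ht⟩ := exists_notMem_span_of_linearIndependent (v := v) hw
    refine ⟨Fin.snoc v (w t), linearIndependent_finSnoc.2 ⟨hv, ht⟩, Fin.lastCases ?_ ?_⟩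
    · simp only [Fin.snoc_last, Fin.val_last]
      exact ⟨(hwLC t).1, hC.smul_set_subset_smul_set h0 hlam.le hlt.le (hwLC t).2⟩
    · intro j
      simpa only [Fin.snoc_castSucc, Fin.val_castSucc] using hvLC j

end SuccessiveMinima

section Compound

variable {n p : ℕ}

/-- Plücker coordinates on `⋀^p ℝⁿ`: coordinates in the basis induced by the standard basis of `ℝⁿ`;
they turn `ιMulti` into `wedge`. -/
noncomputable def pluckerEquiv (n p : ℕ) : ⋀[ℝ]^p (Fin n → ℝ) ≃ₗ[ℝ] (WedgeIdx n p → ℝ) :=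
  (((Pi.basisFun ℝ (Fin n)).exteriorPower p).reindex
    (Equiv.subtypeEquivRight fun _ => Iff.rfl : Set.powersetCard (Fin n) p ≃ WedgeIdx n p)).equivFun

theorem pluckerEquiv_ιMulti (v : Fin p → Fin n → ℝ) :
    pluckerEquiv n p (exteriorPower.ιMulti ℝ p v) = wedge n p v := by
  funext s
  simp only [pluckerEquiv, Basis.equivFun_apply, Basis.repr_reindex_apply,
    exteriorPower.basis_repr_apply, exteriorPower.ιMultiDual_apply_ιMulti]
  rfl

theorem wedge_smul (c : Fin p → ℝ) (v : Fin p → Fin n → ℝ) :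
    wedge n p (fun i => c i • v i) = (∏ i, c i) • wedge n p v := by
  rw [← pluckerEquiv_ιMulti, ← pluckerEquiv_ιMulti, AlternatingMap.map_smul_univ, map_smul]

theorem wedge_zero (hp : 0 < p) : wedge n p 0 = 0 := by
  have : Nonempty (Fin p) := ⟨⟨0, hp⟩⟩
  rw [← pluckerEquiv_ιMulti, AlternatingMap.map_zero, map_zero]

theorem linearIndependent_wedge_comp_orderEmbOfFin {v : Fin n → Fin n → ℝ}
    (hv : LinearIndependent ℝ v) :
    LinearIndependent ℝ fun t : WedgeIdx n p => wedge n p (v ∘ t.1.orderEmbOfFin t.2) := by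
  let e : WedgeIdx n p ≃ Set.powersetCard (Fin n) p := Equiv.subtypeEquivRight fun _ => Iff.rfl
  have heq : (fun t : WedgeIdx n p => wedge n p (v ∘ t.1.orderEmbOfFin t.2)) =
      pluckerEquiv n p ∘ exteriorPower.ιMulti_family ℝ p v ∘ e :=
    funext fun t => (pluckerEquiv_ιMulti _).symm
  rw [heq]
  exact ((exteriorPower.ιMulti_family_linearIndependent_field p hv).map'
    (pluckerEquiv n p).toLinearMap (pluckerEquiv n p).ker).comp e e.injective

theorem zero_mem_compoundBody {C : Set (Fin n → ℝ)} (hp : 0 < p) (h0 : 0 ∈ C) :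
    0 ∈ compoundBody n p C :=
  subset_convexHull ℝ _ ⟨0, fun _ => h0, (wedge_zero hp).symm⟩

theorem wedge_mem_compoundLattice {L : Set (Fin n → ℝ)} {v : Fin p → Fin n → ℝ}
    (hv : ∀ i, v i ∈ L) : wedge n p v ∈ compoundLattice n p L :=
  Submodule.subset_span ⟨v, hv, rfl⟩

theorem wedge_mem_smul_compoundBody {C : Set (Fin n → ℝ)} {c : Fin p → ℝ}
    {v : Fin p → Fin n → ℝ} (hv : ∀ i, v i ∈ c i • C) :
    wedge n p v ∈ (∏ i, c i) • compoundBody n p C := by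
  choose x hxC hx using hv
  obtain rfl : (fun i => c i • x i) = v := funext hx
  rw [wedge_smul]
  exact Set.smul_mem_smul_set (subset_convexHull ℝ _ ⟨x, hxC, rfl⟩)

theorem wedge_comp_orderEmbOfFin_mem_smul_compoundBody {C : Set (Fin n → ℝ)} {r : Fin n → ℝ}
    {v : Fin n → Fin n → ℝ} (t : WedgeIdx n p) (hv : ∀ j, v j ∈ r j • C) :
    wedge n p (v ∘ t.1.orderEmbOfFin t.2) ∈ (∏ j ∈ t.1, r j) • compoundBody n p C := by
  have hprod : ∏ i, r (t.1.orderEmbOfFin t.2 i) = ∏ j ∈ t.1, r j := by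
    rw [← Finset.prod_coe_sort t.1]
    exact (t.1.orderIsoOfFin t.2).toEquiv.prod_comp fun j => r j
  rw [← hprod]
  exact wedge_mem_smul_compoundBody fun i => hv (t.1.orderEmbOfFin t.2 i)

end Compound

theorem row_mem_latticeOf {n : ℕ} (B : Fin n → Fin n → ℝ) (i : Fin n) : B i ∈ latticeOf B :=
  ⟨Pi.single i 1, by simp [Pi.single_apply]⟩

theorem succMinSet_latticeOf_nonempty {n : ℕ} {C : Set (Fin n → ℝ)} (hC : C ∈ 𝓝 0)
    {B : Fin n → Fin n → ℝ} (hB : (Matrix.of B).det ≠ 0) {i : ℕ} (hi : i ≤ n) :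
    (succMinSet C (latticeOf B) i).Nonempty := by
  have hrows : LinearIndependent ℝ B :=
    Matrix.linearIndependent_rows_iff_isUnit.2 ((Matrix.isUnit_iff_isUnit_det _).2 hB.isUnit)
  exact succMinSet_nonempty hC (hrows.comp _ (Fin.castLE_injective hi))
    fun j => row_mem_latticeOf B _

theorem compound_succ_min_upper_bound_general
    (n p : ℕ) (hp : 1 ≤ p)
    (C : Set (Fin n → ℝ))
    (hconv : Convex ℝ C)
    (h0 : (0 : Fin n → ℝ) ∈ interior C)
    (B : Fin n → Fin n → ℝ) (hB : (Matrix.of B).det ≠ 0)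
    (e : Fin (Nat.choose n p) ≃ WedgeIdx n p)
    (he : Monotone fun k => ∏ j ∈ (e k).1, succMin C (latticeOf B) (j.1 + 1)) :
    ∀ k : Fin (Nat.choose n p),
      succMin (compoundBody n p C) (compoundLattice n p (latticeOf B)) (k.1 + 1) ≤
        ∏ j ∈ (e k).1, succMin C (latticeOf B) (j.1 + 1) := by
  intro k
  set lam : Fin n → ℝ := fun j => succMin C (latticeOf B) (j.1 + 1)
  let idx : Fin (k.1 + 1) → WedgeIdx n p := fun k' => e (Fin.castLE k.2 k')
  refine le_of_forall_pos_le_add fun ε hε => ?_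
  obtain ⟨δ, hδ, hδlt⟩ := exists_pos_forall_prod_add_lt (fun k' => (idx k').1) lam
    fun k' => (he (Fin.mk_le_mk.2 (Nat.le_of_lt_succ k'.2))).trans_lt (lt_add_of_pos_right _ hε)
  obtain ⟨v, hv, hvLC⟩ := exists_linearIndependent_mem_smul_succMin hconv (interior_subset h0)
    (fun i hi => succMinSet_latticeOf_nonempty (mem_interior_iff_mem_nhds.1 h0) hB hi) hδ
  have hμ : 0 ≤ ∏ j ∈ (e k).1, lam j := Finset.prod_nonneg fun j _ => succMin_nonneg _ _ _
  refine succMin_le ⟨add_pos_of_nonneg_of_pos hμ hε, _,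
    (linearIndependent_wedge_comp_orderEmbOfFin hv).comp idx
      (e.injective.comp (Fin.castLE_injective _)),
    fun k' => ⟨wedge_mem_compoundLattice fun i => (hvLC _).1, ?_⟩⟩
  have hCp0 : 0 ∈ compoundBody n p C := zero_mem_compoundBody hp (interior_subset h0)
  exact (convex_convexHull ℝ _).smul_set_subset_smul_set hCp0
    (Finset.prod_nonneg fun j _ => add_nonneg (succMin_nonneg _ _ _) hδ.le) (hδlt k').le
    (wedge_comp_orderEmbOfFin_mem_smul_compoundBody _ fun j => (hvLC j).2)

/-- Upper bound for the successive minima of compounds: if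
`μ₁ ≤ ⋯ ≤ μ_N` are the products `λ_{i₁}(C,Λ)⋯λ_{i_p}(C,Λ)` over increasing
`p`-tuples, arranged in non-decreasing order (via a monotone enumeration `e`),
then `λ_i(C_p,Λ_p) ≤ μ_i` for `i = 1,…,N`. -/
theorem compound_succ_min_upper_bound
    (n p : ℕ) (hp : 1 ≤ p) (hpn : p ≤ n - 1)
    (C : Set (Fin n → ℝ))
    (hcomp : IsCompact C) (hconv : Convex ℝ C) (hsym : C = -C)
    (h0 : (0 : Fin n → ℝ) ∈ interior C)
    (B : Fin n → Fin n → ℝ) (hB : (Matrix.of B).det ≠ 0)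
    (e : Fin (Nat.choose n p) ≃ WedgeIdx n p)
    (he : Monotone fun k => ∏ j ∈ (e k).1, succMin C (latticeOf B) (j.1 + 1)) :
    ∀ k : Fin (Nat.choose n p),
      succMin (compoundBody n p C) (compoundLattice n p (latticeOf B)) (k.1 + 1) ≤
        ∏ j ∈ (e k).1, succMin C (latticeOf B) (j.1 + 1) :=
  compound_succ_min_upper_bound_general n p hp C hconv h0 B hB e he
end

section
/- (Khintchine–Dyson transference, special case m = 1) Let α_1,…,α_{n−1} be real numbers and suppose there exists η > 0 such that infinitely many integers q > 0 satisfy max_i ‖q·α_i‖ ≤ q^{−(1+η)/(n−1)} (where ‖·‖ denotes distance to the nearest integer). Then there exists η* ≥ η/((n−2)η + n − 1) such that infinitely many nonzero integer vectors u = (u_1,…,u_{n−1}) satisfy ‖u_1α_1 + ⋯ + u_{n−1}α_{n−1}‖ ≤ (max_i|u_i|)^{−(n−1)(1+η*')} for every η*' < η*. -/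
/-!
Given `q` with `‖q αᵢ‖ ≤ q^(-(1+η)/k)`, put `Q = q^(1/k)` and sort the vectors of `[0, ⌈Q⌉]^k`
by the residue of `∑ wᵢ round (q αᵢ)` modulo `q`. The difference `w` of two vectors in the same
class satisfies `q ‖w · α‖ ≤ ∑ |wᵢ| ‖q αᵢ‖`, hence `‖w · α‖ ≲ Q^(-(k+η))` while `|w| ≲ Q`: this
gives the exponent `η* = η / k ≥ η / ((k-1)η + k)`. As `q` runs through infinitely many values,
`‖w · α‖` becomes arbitrarily small; so if only finitely many `w` qualified, one of them would
be an exact relation `w · α ∈ ℤ`, and then all its multiples qualify.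
-/
open Filter Finset

section LinearForms

variable {ι : Type*} [Fintype ι]

theorem exists_ne_zero_natAbs_le_dvd_sum_mul [Nonempty ι] {q U : ℕ} (hq : q ≠ 0)
    (hU : q ≤ U ^ Fintype.card ι) (p : ι → ℤ) :
    ∃ w : ι → ℤ, w ≠ 0 ∧ (∀ i, (w i).natAbs ≤ U) ∧ (q : ℤ) ∣ ∑ i, w i * p i := by
  classical
  have : NeZero q := ⟨hq⟩
  have hcard : Fintype.card (ZMod q) < Fintype.card (ι → Fin (U + 1)) := by
    rw [ZMod.card, Fintype.card_fun, Fintype.card_fin]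
    exact hU.trans_lt (Nat.pow_lt_pow_left U.lt_succ_self Fintype.card_ne_zero)
  obtain ⟨a, b, hab, hfab⟩ := Fintype.exists_ne_map_eq_of_card_lt
    (fun c : ι → Fin (U + 1) => ∑ i, ((c i : ℕ) : ZMod q) * (p i : ZMod q)) hcard
  refine ⟨fun i => (a i : ℤ) - (b i : ℤ), fun h => hab ?_, fun i => ?_, ?_⟩
  · funext i
    have := congrFun h i
    simp only [Pi.zero_apply, sub_eq_zero] at this
    exact Fin.ext (by exact_mod_cast this)
  · have := (a i).is_lt
    have := (b i).is_lt
    dsimp only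
    omega
  · rw [← ZMod.intCast_zmod_eq_zero_iff_dvd]
    push_cast
    simp only [sub_mul, Finset.sum_sub_distrib, sub_eq_zero]
    exact hfab

theorem abs_sum_mul_sub_round_le {q : ℕ} (hq : q ≠ 0) (α : ι → ℝ) (w : ι → ℤ)
    (hdvd : (q : ℤ) ∣ ∑ i, w i * round ((q : ℝ) * α i)) :
    |(∑ i, (w i : ℝ) * α i) - round (∑ i, (w i : ℝ) * α i)| ≤
      (∑ i, |(w i : ℝ)| * |(q : ℝ) * α i - round ((q : ℝ) * α i)|) / q := by
  obtain ⟨t, ht⟩ := hdvd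
  have hqR : (0 : ℝ) < q := by positivity
  have hmul : (q : ℝ) * ((∑ i, (w i : ℝ) * α i) - t) =
      ∑ i, (w i : ℝ) * ((q : ℝ) * α i - round ((q : ℝ) * α i)) := by
    have htR : ∑ i, (w i : ℝ) * (round ((q : ℝ) * α i) : ℝ) = q * t := by
      exact_mod_cast ht
    simp only [mul_sub, Finset.sum_sub_distrib, htR, Finset.mul_sum]
    congr 1
    exact Finset.sum_congr rfl fun i _ => by ring
  rw [le_div_iff₀ hqR]
  calc |(∑ i, (w i : ℝ) * α i) - round (∑ i, (w i : ℝ) * α i)| * q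
      ≤ |(∑ i, (w i : ℝ) * α i) - t| * q :=
        mul_le_mul_of_nonneg_right (round_le _ t) hqR.le
    _ = |∑ i, (w i : ℝ) * ((q : ℝ) * α i - round ((q : ℝ) * α i))| := by
      rw [← hmul, abs_mul, abs_of_pos hqR, mul_comm]
    _ ≤ ∑ i, |(w i : ℝ)| * |(q : ℝ) * α i - round ((q : ℝ) * α i)| := by
      simpa only [abs_mul] using Finset.abs_sum_le_sum_abs
        (fun i => (w i : ℝ) * ((q : ℝ) * α i - round ((q : ℝ) * α i))) univ

theorem exists_linear_form_le_of_simultaneous [Nonempty ι] {q U : ℕ} (hq : q ≠ 0)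
    (hU : q ≤ U ^ Fintype.card ι) (α : ι → ℝ) {δ : ℝ}
    (hα : ∀ i, |(q : ℝ) * α i - round ((q : ℝ) * α i)| ≤ δ) :
    ∃ w : ι → ℤ, w ≠ 0 ∧ (∀ i, (w i).natAbs ≤ U) ∧
      |(∑ i, (w i : ℝ) * α i) - round (∑ i, (w i : ℝ) * α i)| ≤
        Fintype.card ι * U * δ / q := by
  obtain ⟨w, hw0, hwU, hdvd⟩ :=
    exists_ne_zero_natAbs_le_dvd_sum_mul hq hU fun i => round ((q : ℝ) * α i)
  refine ⟨w, hw0, hwU, (abs_sum_mul_sub_round_le hq α w hdvd).trans ?_⟩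
  have hwU' : ∀ i, |(w i : ℝ)| ≤ U := fun i => by
    rw [← Int.cast_abs, Int.abs_eq_natAbs]; exact_mod_cast hwU i
  gcongr
  calc ∑ i, |(w i : ℝ)| * |(q : ℝ) * α i - round ((q : ℝ) * α i)|
      ≤ ∑ _i : ι, (U : ℝ) * δ :=
        Finset.sum_le_sum fun i _ => mul_le_mul (hwU' i) (hα i) (abs_nonneg _) U.cast_nonneg
    _ = Fintype.card ι * U * δ := by
      rw [Finset.sum_const, Finset.card_univ, nsmul_eq_mul, mul_assoc]

end LinearForms

theorem Set.Finite.exists_eq_zero_of_forall_exists_lt {β : Type*} {s : Set β} (hs : s.Finite)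
    {f : β → ℝ} (hf : ∀ x ∈ s, 0 ≤ f x) (h : ∀ ε > 0, ∃ x ∈ s, f x < ε) :
    ∃ x ∈ s, f x = 0 := by
  obtain ⟨x, hx, -⟩ := h 1 one_pos
  obtain ⟨y, hy, hmin⟩ := s.exists_min_image f hs ⟨x, hx⟩
  refine ⟨y, hy, le_antisymm (not_lt.mp fun hpos => ?_) (hf y hy)⟩
  obtain ⟨z, hz, hzy⟩ := h (f y) hpos
  exact (hmin z hz).not_gt hzy

theorem eventually_mul_rpow_neg_le_two_mul_rpow_neg (C : ℝ) {a b : ℝ} (hab : a < b) :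
    ∀ᶠ Q : ℝ in atTop, C * Q ^ (-b) ≤ (2 * Q) ^ (-a) := by
  have hsmall : Tendsto (fun Q : ℝ => C * Q ^ (-(b - a))) atTop (nhds 0) := by
    simpa using (tendsto_rpow_neg_atTop (sub_pos.mpr hab)).const_mul C
  filter_upwards [hsmall.eventually (ge_mem_nhds (Real.rpow_pos_of_pos two_pos (-a))),
    eventually_gt_atTop 0] with Q hQ hQ0
  calc C * Q ^ (-b) = C * Q ^ (-(b - a)) * Q ^ (-a) := by
        rw [mul_assoc, ← Real.rpow_add hQ0]; ring_nf
    _ ≤ 2 ^ (-a) * Q ^ (-a) := by gcongr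
    _ = (2 * Q) ^ (-a) := (Real.mul_rpow zero_le_two hQ0.le).symm

section Approximants

variable {ι : Type*} [Fintype ι]

def linearFormApproximants (α : ι → ℝ) (s : ℝ) : Set (ι → ℤ) :=
  {u | u ≠ 0 ∧ |(∑ i, (u i : ℝ) * α i) - round (∑ i, (u i : ℝ) * α i)| ≤
    ((univ.sup fun i => (u i).natAbs : ℕ) : ℝ) ^ s}

theorem one_le_sup_natAbs {u : ι → ℤ} (hu : u ≠ 0) :
    (1 : ℝ) ≤ ((univ.sup fun i => (u i).natAbs : ℕ) : ℝ) := by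
  obtain ⟨i, hi⟩ := Function.ne_iff.mp hu
  exact_mod_cast (Int.natAbs_pos.mpr hi).trans_le
    (le_sup (f := fun i => (u i).natAbs) (mem_univ i))

theorem linearFormApproximants_mono (α : ι → ℝ) : Monotone (linearFormApproximants α) :=
  fun _ _ hst _ ⟨hu, hle⟩ =>
    ⟨hu, hle.trans (Real.rpow_le_rpow_of_exponent_le (one_le_sup_natAbs hu) hst)⟩

theorem linearFormApproximants_infinite_of_dist_eq_zero {α : ι → ℝ} {u : ι → ℤ} (hu : u ≠ 0)
    (h0 : |(∑ i, (u i : ℝ) * α i) - round (∑ i, (u i : ℝ) * α i)| = 0) (s : ℝ) :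
    (linearFormApproximants α s).Infinite := by
  obtain ⟨m, hm⟩ : ∃ m : ℤ, ∑ i, (u i : ℝ) * α i = m :=
    ⟨_, sub_eq_zero.mp (abs_eq_zero.mp h0)⟩
  refine Set.infinite_of_injective_forall_mem (f := fun n : ℕ => ((n : ℤ) + 1) • u)
    ((smul_left_injective ℤ hu).comp fun m n h => by simpa using h) fun n => ⟨?_, ?_⟩
  · exact smul_ne_zero (by omega) hu
  · have hsum : ∑ i, ((((n : ℤ) + 1) • u) i : ℝ) * α i = (((n : ℤ) + 1) * m : ℤ) := by
      simp only [Pi.smul_apply, smul_eq_mul, Int.cast_mul, mul_assoc, ← Finset.mul_sum, hm]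
    rw [hsum, round_intCast, sub_self, abs_zero]
    positivity

end Approximants

theorem exists_linear_form_le_rpow_of_simultaneous {k : ℕ} (hk : k ≠ 0) (α : Fin k → ℝ) (η : ℝ)
    {q : ℕ} (hq : q ≠ 0)
    (hα : ∀ i, |(q : ℝ) * α i - round ((q : ℝ) * α i)| ≤ (q : ℝ) ^ (-(1 + η) / k)) :
    ∃ w : Fin k → ℤ, w ≠ 0 ∧
      ((univ.sup fun i => (w i).natAbs : ℕ) : ℝ) ≤ 2 * (q : ℝ) ^ (k : ℝ)⁻¹ ∧
      |(∑ i, (w i : ℝ) * α i) - round (∑ i, (w i : ℝ) * α i)| ≤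
        2 * k * ((q : ℝ) ^ (k : ℝ)⁻¹) ^ (-(k + η)) := by
  have : NeZero k := ⟨hk⟩
  set Q := (q : ℝ) ^ (k : ℝ)⁻¹ with hQ
  have hq1 : (1 : ℝ) ≤ q := by exact_mod_cast Nat.one_le_iff_ne_zero.mpr hq
  have hQ1 : 1 ≤ Q := Real.one_le_rpow hq1 (by positivity)
  have hQ0 : 0 < Q := zero_lt_one.trans_le hQ1
  have hqQ : (q : ℝ) = Q ^ k := (Real.rpow_inv_natCast_pow (by positivity) hk).symm
  have hδ : (q : ℝ) ^ (-(1 + η) / k) = Q ^ (-(1 + η)) := by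
    rw [hQ, ← Real.rpow_mul (by positivity)]
    ring_nf
  set U := ⌈Q⌉₊
  have hQU : Q ≤ U := Nat.le_ceil Q
  have hU2 : (U : ℝ) ≤ 2 * Q := by linarith [Nat.ceil_lt_add_one hQ0.le]
  have hqU : q ≤ U ^ Fintype.card (Fin k) := by
    rw [Fintype.card_fin]
    exact_mod_cast hqQ.le.trans (pow_le_pow_left₀ hQ0.le hQU k)
  obtain ⟨w, hw0, hwU, hw⟩ :=
    exists_linear_form_le_of_simultaneous hq hqU α fun i => (hα i).trans_eq hδ
  refine ⟨w, hw0, le_trans (by exact_mod_cast Finset.sup_le fun i _ => hwU i) hU2, hw.trans ?_⟩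
  rw [Fintype.card_fin, hqQ]
  calc k * U * Q ^ (-(1 + η)) / Q ^ k ≤ k * (2 * Q) * Q ^ (-(1 + η)) / Q ^ k := by gcongr
    _ = 2 * k * Q ^ (-(k + η)) := by
      rw [show -((k : ℝ) + η) = 1 + -(1 + η) - k by ring, Real.rpow_sub hQ0, Real.rpow_add hQ0,
        Real.rpow_one, Real.rpow_natCast]
      ring

theorem exists_mem_linearFormApproximants_lt {k : ℕ} (hk : k ≠ 0) (α : Fin k → ℝ) {η : ℝ}
    (hη : 0 < η)
    (hinf : {q : ℕ | 0 < q ∧ ∀ i,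
      |(q : ℝ) * α i - round ((q : ℝ) * α i)| ≤ (q : ℝ) ^ (-(1 + η) / k)}.Infinite)
    {η' : ℝ} (h0 : 0 ≤ η') (hη' : η' < η / k) {ε : ℝ} (hε : 0 < ε) :
    ∃ u ∈ linearFormApproximants α (-(k : ℝ) * (1 + η')),
      |(∑ i, (u i : ℝ) * α i) - round (∑ i, (u i : ℝ) * α i)| < ε := by
  have hkR : (0 : ℝ) < k := by positivity
  have hQ : Tendsto (fun q : ℕ => (q : ℝ) ^ (k : ℝ)⁻¹) atTop atTop :=
    (tendsto_rpow_atTop (by positivity)).comp tendsto_natCast_atTop_atTop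
  have hexp : (k : ℝ) * (1 + η') < k + η := by
    rw [lt_div_iff₀ hkR] at hη'
    linarith
  have hle := eventually_mul_rpow_neg_le_two_mul_rpow_neg (2 * k) hexp
  have hlt : ∀ᶠ Q : ℝ in atTop, 2 * k * Q ^ (-(k + η)) < ε := by
    refine ((tendsto_rpow_neg_atTop (by positivity)).const_mul (2 * (k : ℝ))).eventually
      (gt_mem_nhds ?_)
    simpa using hε
  obtain ⟨q, ⟨hq, hα⟩, hqle, hqlt⟩ := ((Nat.frequently_atTop_iff_infinite.mpr hinf).and_eventually
    (hQ.eventually (hle.and hlt))).exists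
  obtain ⟨w, hw0, hwM, hw⟩ := exists_linear_form_le_rpow_of_simultaneous hk α η hq.ne' hα
  refine ⟨w, ⟨hw0, hw.trans (hqle.trans ?_)⟩, hw.trans_lt hqlt⟩
  rw [neg_mul]
  exact Real.rpow_le_rpow_of_nonpos (zero_lt_one.trans_le (one_le_sup_natAbs hw0)) hwM
    (by nlinarith)

/-- Khintchine's transference principle (case `m = 1` of Dyson's inequalities,
with `n = k + 1`, so `n - 1 = k` and `n - 2 = k - 1`): if for some `η > 0`
infinitely many positive integers `q` satisfy
`max_i ‖q αᵢ‖ ≤ q^{-(1+η)/k}`, then there is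
`η* ≥ η / ((k-1)η + k)` such that for every `η' < η*` there are infinitely
many nonzero integer vectors `u` with
`‖u₁α₁ + ⋯ + u_k α_k‖ ≤ (max_i |uᵢ|)^{-k(1+η')}`.
Here `‖x‖ = |x - round x|` is the distance to the nearest integer. -/
theorem khintchine_transference
    (k : ℕ) (hk : 1 ≤ k) (α : Fin k → ℝ) (η : ℝ) (hη : 0 < η)
    (hinf : {q : ℕ | 0 < q ∧ ∀ i,
      |(q : ℝ) * α i - round ((q : ℝ) * α i)| ≤ (q : ℝ) ^ (-(1 + η) / k)}.Infinite) :
    ∃ ηs : ℝ, η / (((k : ℝ) - 1) * η + k) ≤ ηs ∧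
      ∀ η' < ηs,
        {u : Fin k → ℤ | u ≠ 0 ∧
          |(∑ i, (u i : ℝ) * α i) - round (∑ i, (u i : ℝ) * α i)| ≤
            ((Finset.univ.sup fun i => (u i).natAbs : ℕ) : ℝ) ^
              (-(k : ℝ) * (1 + η'))}.Infinite := by
  have hk0 : k ≠ 0 := Nat.one_le_iff_ne_zero.mp hk
  have hkR : (0 : ℝ) < k := by positivity
  have hk1 : (0 : ℝ) ≤ k - 1 := sub_nonneg.mpr (by exact_mod_cast hk)
  refine ⟨η / k, div_le_div_of_nonneg_left hη.le hkR
    (le_add_of_nonneg_left (mul_nonneg hk1 hη.le)), fun η' hη' => ?_⟩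
  refine Set.Infinite.mono (linearFormApproximants_mono α
    (by nlinarith [le_max_left η' 0] : -(k : ℝ) * (1 + max η' 0) ≤ -(k : ℝ) * (1 + η'))) ?_
  by_contra hfin
  obtain ⟨u, ⟨hu0, -⟩, hu⟩ :=
    (Set.not_infinite.mp hfin).exists_eq_zero_of_forall_exists_lt (fun _ _ => abs_nonneg _)
      fun ε hε => exists_mem_linearFormApproximants_lt hk0 α hη hinf (le_max_right η' 0)
        (max_lt hη' (div_pos hη hkR)) hε
  exact hfin (linearFormApproximants_infinite_of_dist_eq_zero hu0 hu _)
end
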